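/- arXiv:1804.10034 — 8 statements merged into one kernel-verified Lean document; each statement's English description precedes it below -/
import Mathlib

section
/- A permutation σ ∈ S_n is 132-avoiding if and only if its Rothe diagram D(σ) equals its connected component containing the cell (1,1) (where the component is empty if (1,1) ∉ D(σ)). -/
/-- The adjacent transposition `s_a` (1-indexed letter `a`) acting on positions `Fin n`. -/
def adjT (n a : ℕ) : Equiv.Perm (Fin n) :=
  if h : 1 ≤ a ∧ a < n then Equiv.swap ⟨a - 1, by omega⟩ ⟨a, h.2⟩ else 1

/-- The permutation `s_{w_1} ∘ s_{w_2} ∘ ⋯ ∘ s_{w_m}` of a word, transpositions acting on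
positions composed from the left (`s_{w_1}` applied first to the identity). -/
def permOfWord (n : ℕ) (w : List ℕ) : Equiv.Perm (Fin n) :=
  (w.map (adjT n)).prod

/-- The set of inversions of a permutation. -/
def invSet {n : ℕ} (σ : Equiv.Perm (Fin n)) : Set (Fin n × Fin n) :=
  {p | p.1 < p.2 ∧ σ p.2 < σ p.1}

/-- The number of inversions. -/
noncomputable def invNum {n : ℕ} (σ : Equiv.Perm (Fin n)) : ℕ := (invSet σ).ncard

/-- `w` is a reduced word for `σ`: letters in `[n-1]`, the product of the corresponding
adjacent transpositions is `σ`, and the length is `inv σ`. -/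
def IsReducedWord (n : ℕ) (σ : Equiv.Perm (Fin n)) (w : List ℕ) : Prop :=
  (∀ a ∈ w, 1 ≤ a ∧ a < n) ∧ permOfWord n w = σ ∧ w.length = invNum σ

/-- `σ` avoids the pattern 132. -/
def Avoids132 {n : ℕ} (σ : Equiv.Perm (Fin n)) : Prop :=
  ¬ ∃ i1 i2 i3 : Fin n, i1 < i2 ∧ i2 < i3 ∧ σ i1 < σ i3 ∧ σ i3 < σ i2

/-- `σ` avoids the pattern 312. -/
def Avoids312 {n : ℕ} (σ : Equiv.Perm (Fin n)) : Prop :=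
  ¬ ∃ i1 i2 i3 : Fin n, i1 < i2 ∧ i2 < i3 ∧ σ i2 < σ i3 ∧ σ i3 < σ i1

/-- The Rothe diagram of `σ` (permutation matrix with 1s at `(σ i, i)`, 0-indexed):
cells strictly north of the 1 in their column and strictly west of the 1 in their row. -/
def rothe {n : ℕ} (σ : Equiv.Perm (Fin n)) : Set (Fin n × Fin n) :=
  {p | p.1 < σ p.2 ∧ p.2 < σ.symm p.1}

/-- Two cells are adjacent if they share an edge. -/
def adjCell {n : ℕ} (p q : Fin n × Fin n) : Prop :=
  (p.1 = q.1 ∧ ((p.2 : ℕ) + 1 = q.2 ∨ (q.2 : ℕ) + 1 = p.2)) ∨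
  (p.2 = q.2 ∧ ((p.1 : ℕ) + 1 = q.1 ∨ (q.1 : ℕ) + 1 = p.1))

/-- The connected component of the Rothe diagram containing the (0-indexed) cell `(0,0)`,
empty if `(0,0)` is not in the diagram. -/
def comp11 {n : ℕ} (σ : Equiv.Perm (Fin n)) : Set (Fin n × Fin n) :=
  {p | ∃ h0 : 0 < n,
    Relation.ReflTransGen (fun a b => a ∈ rothe σ ∧ b ∈ rothe σ ∧ adjCell a b)
      (⟨⟨0, h0⟩, ⟨0, h0⟩⟩) p ∧
    p ∈ rothe σ ∧ ((⟨⟨0, h0⟩, ⟨0, h0⟩⟩ : Fin n × Fin n)) ∈ rothe σ}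

/-- Edelman–Greene insertion of `x` into a single (strictly increasing) row:
returns the new row and the optional entry bumped into the next row. -/
def insRow (x : ℕ) : List ℕ → List ℕ × Option ℕ
  | [] => ([x], none)
  | z :: zs =>
    if z < x then
      let r := insRow x zs
      (z :: r.1, r.2)
    else if z = x then (z :: zs, some (z + 1))
    else (x :: zs, some z)

/-- Edelman–Greene insertion of `x` into a tableau (list of rows). -/
def insTab (x : ℕ) : List (List ℕ) → List (List ℕ)
  | [] => [[x]]
  | r :: rs =>
    let p := insRow x r
    match p.2 with
    | none => p.1 :: rs
    | some y => p.1 :: insTab y rs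

/-- The Edelman–Greene insertion tableau `P(w)`. -/
def Ptab (w : List ℕ) : List (List ℕ) := w.foldl (fun t x => insTab x t) []

/-- Add the label `k` to the recording tableau `q` at the unique new cell of shape `p`. -/
def recordCell (k : ℕ) : List (List ℕ) → List (List ℕ) → List (List ℕ)
  | _, [] => []
  | [], _ :: _ => [[k]]
  | q :: qs, p :: ps =>
    if q.length < p.length then (q ++ [k]) :: qs else q :: recordCell k qs ps

/-- The Edelman–Greene recording tableau `Q(w) = EG(w)`. -/
def Qtab (w : List ℕ) : List (List ℕ) :=
  (w.foldl (fun pq x =>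
      let P' := insTab x pq.1
      (P', recordCell (pq.2.flatten.length + 1) pq.2 P'))
    (([], []) : List (List ℕ) × List (List ℕ))).2

/-- A tableau is frozen if the cell in (0-indexed) row `i`, column `j` contains `i + j + 1`. -/
def Frozen (P : List (List ℕ)) : Prop :=
  ∀ i j, i < P.length → j < (P.getD i []).length → (P.getD i []).getD j 0 = i + j + 1

/-- All rows strictly increasing. -/
def RowStrict (P : List (List ℕ)) : Prop := ∀ r ∈ P, List.Pairwise (· < ·) r

/-- All columns strictly increasing. -/
def ColStrict (P : List (List ℕ)) : Prop :=
  ∀ i j, i + 1 < P.length → j < (P.getD (i + 1) []).length →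
    (P.getD i []).getD j 0 < (P.getD (i + 1) []).getD j 0

/-- Valid Young-diagram shape: nonempty rows of weakly decreasing lengths. -/
def TabShape (P : List (List ℕ)) : Prop :=
  (∀ r ∈ P, r ≠ []) ∧ ∀ i, i + 1 < P.length → (P.getD (i + 1) []).length ≤ (P.getD i []).length

/-- The reading word: rows left to right, from the bottom row up. -/
def readingWord (P : List (List ℕ)) : List ℕ := P.reverse.flatten

/-- A standard Young tableau: valid shape, strictly increasing rows and columns, and the
entries are `1, …, N` each exactly once. -/
def IsStandard (Q : List (List ℕ)) : Prop :=
  TabShape Q ∧ RowStrict Q ∧ ColStrict Q ∧ Q.flatten.Perm (List.range' 1 Q.flatten.length)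

/-- `Q` has the staircase shape `sc_n = (n-1, n-2, …, 1)`. -/
def StaircaseShape (n : ℕ) (Q : List (List ℕ)) : Prop :=
  Q.length = n - 1 ∧ ∀ i, i < n - 1 → (Q.getD i []).length = n - 1 - i

/-- A sorting network: a reduced word of the reverse permutation in `S_n`. -/
def IsSortingNetwork (n : ℕ) (w : List ℕ) : Prop :=
  IsReducedWord n Fin.revPerm w

/-- Every intermediate permutation of the word avoids 132. -/
def Avoiding132 (n : ℕ) (w : List ℕ) : Prop :=
  ∀ k, k ≤ w.length → Avoids132 (permOfWord n (w.take k))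

/-- Every intermediate permutation of the word avoids 312. -/
def Avoiding312 (n : ℕ) (w : List ℕ) : Prop :=
  ∀ k, k ≤ w.length → Avoids312 (permOfWord n (w.take k))

/-- `c` is the column word of `Q`: its `k`-th letter (1-indexed) is the (1-indexed) column
of the entry `k` in `Q`. -/
def IsColumnWord (Q : List (List ℕ)) (c : List ℕ) : Prop :=
  c.length = Q.flatten.length ∧
  ∀ k, k < c.length → ∃ i j, i < Q.length ∧ j < (Q.getD i []).length ∧
    (Q.getD i []).getD j 0 = k + 1 ∧ c.getD k 0 = j + 1

/-- All anti-diagonals of `Q` increase downwards: `Q_{i,j} > Q_{i-1,j+1}` (1-indexed). -/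
def AntiDiagDown (Q : List (List ℕ)) : Prop :=
  ∀ i j, i + 1 < Q.length → j < (Q.getD (i + 1) []).length → j + 1 < (Q.getD i []).length →
    (Q.getD i []).getD (j + 1) 0 < (Q.getD (i + 1) []).getD j 0

/-! If `σ` avoids 132, its Rothe diagram is a lower set of `Fin n × Fin n`, so every cell is joined
to the corner `(0,0)` by a monotone lattice path inside the diagram. Conversely, a pattern
`i₁ < i₂ < i₃` with `σ i₁ < σ i₃ < σ i₂` puts the cell `(σ i₃, i₂)` in the diagram strictly
south-east of the `1` at `(σ i₁, i₁)`; the diagram contains no cell of the hook of that `1`, and a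
path of adjacent cells from `(0,0)` can only enter the south-east quadrant through that hook. -/

variable {n : ℕ}

/-- `comp11 σ` is phrased with `cellStep (rothe σ)` unfolded. -/
def cellStep (s : Set (Fin n × Fin n)) (a b : Fin n × Fin n) : Prop :=
  a ∈ s ∧ b ∈ s ∧ adjCell a b

namespace Avoids132

variable {σ : Equiv.Perm (Fin n)}

theorem rothe_mem_of_fst_le (h : Avoids132 σ) {r r' c : Fin n} (hp : (r, c) ∈ rothe σ)
    (hr : r' ≤ r) : (r', c) ∈ rothe σ := by
  obtain ⟨hrc, hcr⟩ := hp
  have hr'c : r' < σ c := hr.trans_lt hrc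
  refine ⟨hr'c, not_le.mp fun hle => ?_⟩
  have hne : σ.symm r' ≠ c := fun heq => by simp [← heq] at hr'c
  have hlt : r' < r := hr.lt_of_ne fun heq => by subst heq; exact absurd hcr (not_lt.mpr hle)
  exact h ⟨σ.symm r', c, σ.symm r, hle.lt_of_ne hne, hcr, by simpa using hlt, by simpa using hrc⟩

theorem rothe_mem_of_snd_le (h : Avoids132 σ) {r c c' : Fin n} (hp : (r, c) ∈ rothe σ)
    (hc : c' ≤ c) : (r, c') ∈ rothe σ := by
  obtain ⟨hrc, hcr⟩ := hp
  have hc'r : c' < σ.symm r := hc.trans_lt hcr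
  refine ⟨not_le.mp fun hle => ?_, hc'r⟩
  have hne : σ c' ≠ r := fun heq => by simp [← heq] at hc'r
  have hlt : c' < c := hc.lt_of_ne fun heq => by subst heq; exact absurd hrc (not_lt.mpr hle)
  exact h ⟨c', c, σ.symm r, hlt, hcr, by simpa using hle.lt_of_ne hne, by simpa using hrc⟩

theorem isLowerSet_rothe (h : Avoids132 σ) : IsLowerSet (rothe σ) := fun _ _ hqp hp =>
  h.rothe_mem_of_snd_le (h.rothe_mem_of_fst_le hp hqp.1) hqp.2

end Avoids132

theorem IsLowerSet.reflTransGen_cellStep {s : Set (Fin n × Fin n)} (hs : IsLowerSet s)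
    (h0 : 0 < n) {p : Fin n × Fin n} (hp : p ∈ s) :
    Relation.ReflTransGen (cellStep s) (⟨0, h0⟩, ⟨0, h0⟩) p := by
  induction hk : (p.1 : ℕ) + p.2 generalizing p with
  | zero =>
    obtain rfl : p = (⟨0, h0⟩, ⟨0, h0⟩) :=
      Prod.ext (Fin.ext (show (p.1 : ℕ) = 0 by omega)) (Fin.ext (show (p.2 : ℕ) = 0 by omega))
    exact .refl
  | succ k ih =>
    by_cases hc : (p.2 : ℕ) = 0
    · let q : Fin n × Fin n := (⟨p.1 - 1, by omega⟩, p.2)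
      have hq : q ∈ s := hs (Prod.mk_le_mk.mpr ⟨Fin.le_def.mpr (by simp), le_rfl⟩) hp
      exact (ih hq (by simp only [q]; omega)).tail
        ⟨hq, hp, .inr ⟨rfl, .inl (by simp only [q]; omega)⟩⟩
    · let q : Fin n × Fin n := (p.1, ⟨p.2 - 1, by omega⟩)
      have hq : q ∈ s := hs (Prod.mk_le_mk.mpr ⟨le_rfl, Fin.le_def.mpr (by simp)⟩) hp
      exact (ih hq (by simp only [q]; omega)).tail
        ⟨hq, hp, .inl ⟨rfl, .inl (by simp only [q]; omega)⟩⟩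

theorem not_southeast_of_reflTransGen {σ : Equiv.Perm (Fin n)} {i : Fin n} (h0 : 0 < n)
    {p : Fin n × Fin n}
    (hpath : Relation.ReflTransGen (cellStep (rothe σ)) (⟨0, h0⟩, ⟨0, h0⟩) p) :
    ¬ (σ i < p.1 ∧ i < p.2) := by
  induction hpath with
  | refl => simp [Fin.lt_def]
  | @tail b c _ hbc ih =>
    rintro ⟨hc1, hc2⟩
    obtain ⟨⟨hb1, hb2⟩, -, hadj⟩ := hbc
    simp only [Fin.lt_def, not_and, not_lt] at ih hc1 hc2 hb1 hb2
    rcases hadj with ⟨hrow, hcol | hcol⟩ | ⟨hcol, hrow | hrow⟩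
    all_goals simp only [Fin.ext_iff] at hrow hcol
    · obtain rfl : b.2 = i := Fin.ext (by omega)
      omega
    · omega
    · have hbi : b.1 = σ i := Fin.ext (by omega)
      rw [hbi, Equiv.symm_apply_apply] at hb2
      omega
    · omega

/-- `σ` is 132-avoiding iff its Rothe diagram equals its connected component
containing the cell `(1,1)` (0-indexed `(0,0)`). -/
theorem avoids132_iff_rothe_eq_comp11 (n : ℕ) (σ : Equiv.Perm (Fin n)) :
    Avoids132 σ ↔ rothe σ = comp11 σ := by
  constructor
  · intro h
    refine Set.Subset.antisymm (fun p hp => ?_) fun p hp => hp.2.2.1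
    have h0 : 0 < n := p.1.pos
    have hcorner : ((⟨0, h0⟩, ⟨0, h0⟩) : Fin n × Fin n) ∈ rothe σ :=
      h.isLowerSet_rothe (Prod.mk_le_mk.mpr ⟨Nat.zero_le _, Nat.zero_le _⟩) hp
    exact ⟨h0, h.isLowerSet_rothe.reflTransGen_cellStep h0 hp, hp, hcorner⟩
  · rintro heq ⟨i₁, i₂, i₃, h₁₂, h₂₃, hσ₁₃, hσ₃₂⟩
    have hcell : (σ i₃, i₂) ∈ rothe σ := ⟨hσ₃₂, by simpa using h₂₃⟩
    rw [heq] at hcell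
    obtain ⟨h0, hpath, -⟩ := hcell
    exact not_southeast_of_reflTransGen h0 hpath ⟨hσ₁₃, h₁₂⟩
end

section
/- If σ ∈ S_n is 132-avoiding, then the connected component D_{(1,1)}(σ) of its Rothe diagram containing cell (1,1) is the Young diagram of a partition, i.e., it is left-justified with weakly decreasing row lengths. -/
/-!
For 132-avoiding `σ` the whole Rothe diagram is a lower set: if `(i, j)` is a diagram cell and
the 1 of some column `a < j` lay strictly above row `i`, then the positions `a < j < σ⁻¹ i` would
carry the values `σ a < i < σ j`, a 132 pattern. A lower set of the grid containing `(0, 0)` is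
connected by monotone lattice paths, so the component of `(0, 0)` is the whole diagram.
-/

open Relation

section Rothe

variable {n : ℕ} {σ : Equiv.Perm (Fin n)}

theorem Avoids132.le_apply_of_mem_rothe (h : Avoids132 σ) {i j a : Fin n}
    (hij : (i, j) ∈ rothe σ) (ha : a < j) : i ≤ σ a := by
  by_contra! hσa
  exact h ⟨a, j, σ.symm i, ha, hij.2, by simpa using hσa, by simpa using hij.1⟩

theorem Avoids132.mem_rothe_of_le_snd (h : Avoids132 σ) {i j j' : Fin n}
    (hij : (i, j) ∈ rothe σ) (hj : j' ≤ j) : (i, j') ∈ rothe σ := by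
  refine ⟨?_, hj.trans_lt hij.2⟩
  rcases hj.eq_or_lt with rfl | hj
  · exact hij.1
  refine (h.le_apply_of_mem_rothe hij hj).lt_of_ne ?_
  rintro rfl
  exact (hij.2.trans_eq (σ.symm_apply_apply j')).not_gt hj

theorem Avoids132.mem_rothe_of_le_fst (h : Avoids132 σ) {i i' j : Fin n}
    (hij : (i, j) ∈ rothe σ) (hi : i' ≤ i) : (i', j) ∈ rothe σ := by
  refine ⟨hi.trans_lt hij.1, ?_⟩
  by_contra! hle : σ.symm i' ≤ j
  rcases hle.eq_or_lt with heq | hlt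
  · rw [Equiv.Perm.inv_eq_iff_eq.mp heq] at hi
    exact hi.not_gt hij.1
  · have hii : i = i' :=
      le_antisymm ((h.le_apply_of_mem_rothe hij hlt).trans_eq (σ.apply_symm_apply i')) hi
    exact (hij.2.trans (hii ▸ hlt)).false

theorem Avoids132.isLowerSet_rothe_s2 (h : Avoids132 σ) : IsLowerSet (rothe σ) :=
  fun _ _ hle hmem => h.mem_rothe_of_le_snd (h.mem_rothe_of_le_fst hmem hle.1) hle.2

end Rothe

section LatticePaths

variable {n : ℕ}

theorem reflTransGen_of_le_of_val_add_one {r : Fin n → Fin n → Prop} {a b : Fin n}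
    (hab : a ≤ b) (h : ∀ i j : Fin n, j ≤ b → (i : ℕ) + 1 = j → r i j) :
    ReflTransGen r a b :=
  reflTransGen_of_succ_of_le r (fun i hi => h i _ (Order.succ_le_of_lt hi.2)
    (Nat.covBy_iff_add_one_eq.mp (Fin.covBy_iff.mp
      (Order.covBy_succ_of_not_isMax (not_isMax_of_lt hi.2))))) hab

theorem IsLowerSet.reflTransGen_of_le {S : Set (Fin n × Fin n)} (hS : IsLowerSet S)
    {p q : Fin n × Fin n} (hpq : p ≤ q) (hq : q ∈ S) :
    ReflTransGen (fun a b => a ∈ S ∧ b ∈ S ∧ adjCell a b) p q := by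
  set R : Fin n × Fin n → Fin n × Fin n → Prop := fun a b => a ∈ S ∧ b ∈ S ∧ adjCell a b
  have step {a b : Fin n × Fin n} (hab : a ≤ b) (hbq : b ≤ q) (hadj : adjCell a b) : R a b :=
    ⟨hS (hab.trans hbq) hq, hS hbq hq, hadj⟩
  have row : ReflTransGen R (p.1, p.2) (p.1, q.2) :=
    (reflTransGen_of_le_of_val_add_one hpq.2 fun i j hj hij =>
      step (a := (p.1, i)) (b := (p.1, j)) ⟨le_rfl, show i ≤ j by omega⟩
        ⟨hpq.1, hj⟩ (.inl ⟨rfl, .inl hij⟩)).lift (fun j => (p.1, j)) fun _ _ h => h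
  have col : ReflTransGen R (p.1, q.2) (q.1, q.2) :=
    (reflTransGen_of_le_of_val_add_one hpq.1 fun i j hj hij =>
      step (a := (i, q.2)) (b := (j, q.2)) ⟨show i ≤ j by omega, le_rfl⟩
        ⟨hj, le_rfl⟩ (.inr ⟨rfl, .inl hij⟩)).lift (fun i => (i, q.2)) fun _ _ h => h
  exact row.trans col

end LatticePaths

/-- for 132-avoiding `σ`, the top-left component of the Rothe diagram is the
Young diagram of a partition, i.e. it is a lower set: top- and left-justified with weakly
decreasing row lengths. -/
theorem comp11_isLowerSet (n : ℕ) (σ : Equiv.Perm (Fin n)) (h : Avoids132 σ) :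
    ∀ p q : Fin n × Fin n, p ∈ comp11 σ → q.1 ≤ p.1 → q.2 ≤ p.2 → q ∈ comp11 σ := by
  rintro p q ⟨h0, -, hp, h00⟩ hq1 hq2
  have hq : q ∈ rothe σ := h.isLowerSet_rothe_s2 ⟨hq1, hq2⟩ hp
  exact ⟨h0, h.isLowerSet_rothe_s2.reflTransGen_of_le ⟨Nat.zero_le _, Nat.zero_le _⟩ hq, hq, h00⟩
end

section
/- For each partition λ whose Young diagram is contained in the staircase shape sc_n = (n-1, n-2, ..., 1), there exists exactly one 132-avoiding permutation σ ∈ S_n whose Rothe diagram is the Young diagram of λ. -/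
/-!
Write `τ = σ⁻¹`, so that the `1` of row `r` sits in column `τ r`. Row `r` of the Rothe diagram
consists of the columns `c < τ r` not used by the rows above it, so `τ r` is the least column
outside row `r` of the diagram that no earlier row uses: the diagram determines `σ`.

Conversely, given `λ ⊆ sc_n`, let `τ r` be the least column `≥ λ_r` not used by earlier rows;
`λ_r + r < n` keeps it in range. Since `λ` is weakly decreasing, every earlier row uses a column
`≥ λ_r`, so row `r` of the diagram is exactly `[0, λ_r)`. A 132 pattern, i.e. rows `a < b < c`
with `τ a < τ c < τ b`, is impossible: `λ_b ≤ λ_a ≤ τ a < τ c < τ b` forces `τ c` to be used by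
a row before `b`.
-/

theorem exists_le_notMem_finset (s : Finset ℕ) (b : ℕ) : ∃ m, b ≤ m ∧ m ∉ s :=
  (Set.Ici_infinite b).exists_notMem_finset s

def freshAbove (s : Finset ℕ) (b : ℕ) : ℕ := Nat.find (exists_le_notMem_finset s b)

theorem le_freshAbove (s : Finset ℕ) (b : ℕ) : b ≤ freshAbove s b :=
  (Nat.find_spec (exists_le_notMem_finset s b)).1

theorem freshAbove_notMem (s : Finset ℕ) (b : ℕ) : freshAbove s b ∉ s :=
  (Nat.find_spec (exists_le_notMem_finset s b)).2

theorem mem_of_le_of_lt_freshAbove {s : Finset ℕ} {b m : ℕ} (hb : b ≤ m)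
    (hm : m < freshAbove s b) : m ∈ s := by
  by_contra hs
  exact Nat.find_min (exists_le_notMem_finset s b) hm ⟨hb, hs⟩

theorem freshAbove_le_add_card (s : Finset ℕ) (b : ℕ) : freshAbove s b ≤ b + s.card := by
  by_contra! h
  have hsub : Finset.Ico b (b + s.card + 1) ⊆ s := fun m hm => by
    rw [Finset.mem_Ico] at hm
    exact mem_of_le_of_lt_freshAbove hm.1 (by omega)
  have := Finset.card_le_card hsub
  simp only [Nat.card_Ico] at this
  omega

/-- The columns used by the first `r` rows of the greedy construction. -/
def greedyTaken (lam : ℕ → ℕ) : ℕ → Finset ℕ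
  | 0 => ∅
  | r + 1 => insert (freshAbove (greedyTaken lam r) (lam r)) (greedyTaken lam r)

def greedy (lam : ℕ → ℕ) (r : ℕ) : ℕ := freshAbove (greedyTaken lam r) (lam r)

section Greedy

variable (lam : ℕ → ℕ)

theorem greedyTaken_eq_image (r : ℕ) :
    greedyTaken lam r = (Finset.range r).image (greedy lam) := by
  induction r with
  | zero => rfl
  | succ r ih => rw [greedyTaken, Finset.range_add_one, Finset.image_insert, ← ih, greedy]

theorem le_greedy (r : ℕ) : lam r ≤ greedy lam r := le_freshAbove _ _

theorem greedy_le_add (r : ℕ) : greedy lam r ≤ lam r + r := by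
  calc greedy lam r ≤ lam r + (greedyTaken lam r).card := freshAbove_le_add_card _ _
    _ ≤ lam r + r := by
      rw [greedyTaken_eq_image]
      exact Nat.add_le_add_left (Finset.card_image_le.trans (Finset.card_range r).le) _

theorem greedy_injective : Function.Injective (greedy lam) := by
  intro s r heq
  by_contra hne
  wlog hsr : s < r generalizing s r
  · exact this heq.symm (Ne.symm hne) (by omega)
  have hmem : greedy lam s ∈ greedyTaken lam r := by
    rw [greedyTaken_eq_image]
    exact Finset.mem_image_of_mem _ (Finset.mem_range.mpr hsr)
  exact freshAbove_notMem _ _ (heq ▸ hmem)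

theorem exists_lt_greedy_eq {r m : ℕ} (hm : lam r ≤ m) (hmr : m < greedy lam r) :
    ∃ s < r, greedy lam s = m := by
  have := mem_of_le_of_lt_freshAbove hm hmr
  rw [greedyTaken_eq_image] at this
  simpa using this

end Greedy

/-- `τ` is the inverse of the permutation being built: `τ r` is the column of the `1` in row `r`. -/
def IsGreedyFor {n : ℕ} (lam : Fin n → ℕ) (τ : Equiv.Perm (Fin n)) : Prop :=
  ∀ r, lam r ≤ τ r ∧ ∀ c : Fin n, lam r ≤ c → c < τ r → ∃ s < r, τ s = c

theorem exists_isGreedyFor {n : ℕ} (lam : Fin n → ℕ) (hlam : ∀ r : Fin n, lam r + r < n) :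
    ∃ τ, IsGreedyFor lam τ := by
  set μ : ℕ → ℕ := fun r => if h : r < n then lam ⟨r, h⟩ else 0
  have hμ : ∀ r : Fin n, μ r = lam r := fun r => dif_pos r.2
  have hlt : ∀ r : Fin n, greedy μ r < n := fun r =>
    (greedy_le_add μ r).trans_lt (hμ r ▸ hlam r)
  let f : Fin n → Fin n := fun r => ⟨greedy μ r, hlt r⟩
  have hf : Function.Injective f := fun a b hab =>
    Fin.ext (greedy_injective μ (congrArg Fin.val hab))
  refine ⟨Equiv.ofBijective f (Finite.injective_iff_bijective.mp hf), fun r => ⟨?_, ?_⟩⟩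
  · exact hμ r ▸ le_greedy μ r
  · intro c hc hcr
    obtain ⟨s, hs, hsc⟩ := exists_lt_greedy_eq μ (hμ r ▸ hc) hcr
    exact ⟨⟨s, hs.trans r.2⟩, hs, Fin.ext hsc⟩

section IsGreedyFor

variable {n : ℕ} {lam : Fin n → ℕ} {τ : Equiv.Perm (Fin n)}

theorem rothe_symm_of_isGreedyFor (hdec : Antitone lam) (hτ : IsGreedyFor lam τ) :
    rothe τ.symm = {p : Fin n × Fin n | (p.2 : ℕ) < lam p.1} := by
  ext ⟨r, c⟩
  simp only [rothe, Set.mem_ofPred_eq, Equiv.symm_symm]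
  constructor
  · rintro ⟨hr, hc⟩
    by_contra! hle
    obtain ⟨s, hs, rfl⟩ := (hτ r).2 c hle hc
    exact (hr.trans_eq (τ.symm_apply_apply s)).not_gt hs
  · intro hc
    refine ⟨?_, hc.trans_le (hτ r).1⟩
    by_contra! hle
    have hτs := (hτ (τ.symm c)).1
    rw [τ.apply_symm_apply] at hτs
    exact absurd ((hdec hle).trans hτs) (not_le.mpr hc)

theorem avoids132_symm_of_isGreedyFor (hdec : Antitone lam) (hτ : IsGreedyFor lam τ) :
    Avoids132 τ.symm := by
  rintro ⟨i₁, i₂, i₃, h₁₂, h₂₃, hab, hbc⟩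
  set a := τ.symm i₁
  set b := τ.symm i₃
  set c := τ.symm i₂
  have hτa : τ a = i₁ := τ.apply_symm_apply i₁
  have hτb : τ b = i₃ := τ.apply_symm_apply i₃
  have hτc : τ c = i₂ := τ.apply_symm_apply i₂
  have hlam : lam b ≤ τ c := by
    calc lam b ≤ lam a := hdec hab.le
      _ ≤ τ a := (hτ a).1
      _ ≤ τ c := by rw [hτa, hτc]; exact Fin.val_le_of_le h₁₂.le
  obtain ⟨s, hs, hsc⟩ := (hτ b).2 (τ c) hlam (by rw [hτc, hτb]; exact h₂₃)
  exact (hs.trans hbc).ne (τ.injective hsc)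

end IsGreedyFor

theorem mem_rothe_or_exists_of_lt_symm_apply {n : ℕ} {σ : Equiv.Perm (Fin n)} {r c : Fin n}
    (hc : c < σ.symm r) : (r, c) ∈ rothe σ ∨ ∃ s < r, σ.symm s = c := by
  rcases lt_trichotomy r (σ c) with hr | hr | hr
  · exact Or.inl ⟨hr, hc⟩
  · exact absurd (hr ▸ σ.symm_apply_apply c) hc.ne'
  · exact Or.inr ⟨σ c, hr, σ.symm_apply_apply c⟩

theorem symm_apply_le_of_rothe_eq {n : ℕ} {σ σ' : Equiv.Perm (Fin n)} (h : rothe σ = rothe σ')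
    {r : Fin n} (hlt : ∀ s < r, σ.symm s = σ'.symm s) : σ.symm r ≤ σ'.symm r := by
  by_contra! hr
  rcases mem_rothe_or_exists_of_lt_symm_apply hr with hmem | ⟨s, hs, hsr⟩
  · exact (h ▸ hmem).2.false
  · rw [hlt s hs] at hsr
    exact hs.ne (σ'.symm.injective hsr)

theorem rothe_injective {n : ℕ} : Function.Injective (rothe (n := n)) := by
  intro σ σ' h
  suffices hsymm : σ.symm = σ'.symm from Equiv.symm_bijective.injective hsymm
  ext r : 1
  induction r using WellFoundedLT.induction with
  | ind r ih =>
    exact le_antisymm (symm_apply_le_of_rothe_eq h ih)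
      (symm_apply_le_of_rothe_eq h.symm fun s hs => (ih s hs).symm)

/-- for each partition `λ` contained in the staircase `sc_n`, there is exactly
one 132-avoiding permutation of `[n]` whose Rothe diagram is the Young diagram of `λ`. -/
theorem existsUnique_avoids132_of_partition (n : ℕ) (lam : Fin n → ℕ)
    (hdec : ∀ i j : Fin n, i ≤ j → lam j ≤ lam i)
    (hstair : ∀ i : Fin n, lam i ≤ n - 1 - (i : ℕ)) :
    ∃! σ : Equiv.Perm (Fin n), Avoids132 σ ∧
      rothe σ = {p : Fin n × Fin n | (p.2 : ℕ) < lam p.1} := by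
  obtain ⟨τ, hτ⟩ := exists_isGreedyFor lam fun i => by have := hstair i; omega
  have hrothe := rothe_symm_of_isGreedyFor hdec hτ
  refine ⟨τ.symm, ⟨avoids132_symm_of_isGreedyFor hdec hτ, hrothe⟩, ?_⟩
  rintro σ ⟨-, hσ⟩
  exact rothe_injective (hσ.trans hrothe.symm)
end

section
/- For fixed n, the map sending a 132-avoiding permutation σ ∈ S_n to the partition given by its Rothe diagram is a bijection between S_n(132) and the set of partitions λ whose Young diagram is contained in the staircase (n-1, n-2, ..., 1), and under this bijection the number of inversions of σ equals the size |λ|. -/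
section AuxCode

variable {n : ℕ}

/-- Lehmer code (indexed by position). -/
def codeF (w : Equiv.Perm (Fin n)) (i : Fin n) : ℕ :=
  (Finset.univ.filter (fun l => i < l ∧ w l < w i)).card

lemma rowLen_eq (σ : Equiv.Perm (Fin n)) (i : Fin n) :
    {j : Fin n | (i, j) ∈ rothe σ}.ncard = codeF σ⁻¹ i := by
  have h1 : {j : Fin n | (i, j) ∈ rothe σ} =
      ↑(Finset.univ.filter (fun j => i < σ j ∧ j < σ⁻¹ i)) := by
    ext j; simp [rothe, Equiv.Perm.inv_def]
  rw [h1, Set.ncard_coe_finset]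
  apply Finset.card_bij (fun j _ => σ j)
  · intro j hj
    simp only [Finset.mem_filter, Finset.mem_univ, true_and] at hj ⊢
    exact ⟨hj.1, by simpa using hj.2⟩
  · intro a ha b hb hab; exact σ.injective hab
  · intro l hl
    simp only [Finset.mem_filter, Finset.mem_univ, true_and] at hl
    exact ⟨σ⁻¹ l, by simpa [Finset.mem_filter, hl.1, Equiv.Perm.inv_def] using hl.2, by simp⟩

def invF (w : Equiv.Perm (Fin n)) : ℕ :=
  (Finset.univ.filter (fun p : Fin n × Fin n => p.1 < p.2 ∧ w p.2 < w p.1)).card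

lemma invNum_eq_invF (σ : Equiv.Perm (Fin n)) : invNum σ = invF σ := by
  have : invSet σ = ↑(Finset.univ.filter (fun p : Fin n × Fin n => p.1 < p.2 ∧ σ p.2 < σ p.1)) := by
    ext p; simp [invSet]
  rw [invNum, this, Set.ncard_coe_finset, invF]

lemma invF_inv (σ : Equiv.Perm (Fin n)) : invF σ⁻¹ = invF σ := by
  apply Finset.card_bij (fun p _ => ((σ⁻¹ p.2 : Fin n), (σ⁻¹ p.1 : Fin n)))
  · intro p hp
    simp only [Finset.mem_filter, Finset.mem_univ, true_and] at hp ⊢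
    exact ⟨hp.2, by simpa using hp.1⟩
  · intro a ha b hb hab
    simp only [Prod.mk.injEq] at hab
    have h1 := σ⁻¹.injective hab.1
    have h2 := σ⁻¹.injective hab.2
    exact Prod.ext h2 h1
  · intro q hq
    simp only [Finset.mem_filter, Finset.mem_univ, true_and] at hq
    exact ⟨(σ q.2, σ q.1), by simp [Finset.mem_filter, hq.1, hq.2], by simp⟩

lemma sum_codeF (w : Equiv.Perm (Fin n)) : ∑ i : Fin n, codeF w i = invF w := by
  classical
  rw [invF, Finset.card_eq_sum_card_fiberwise (f := Prod.fst) (t := Finset.univ)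
    (fun p _ => Finset.mem_univ _)]
  apply Finset.sum_congr rfl
  intro i _
  rw [codeF]
  apply Finset.card_bij (fun l _ => ((i, l) : Fin n × Fin n))
  · intro l hl
    simp only [Finset.mem_filter, Finset.mem_univ, true_and] at hl ⊢
    exact ⟨⟨hl.1, hl.2⟩, trivial⟩
  · intro a ha b hb hab
    simpa using congrArg Prod.snd hab
  · intro p hp
    simp only [Finset.mem_filter, Finset.mem_univ, true_and] at hp
    obtain ⟨⟨h1, h2⟩, h3⟩ := hp
    subst h3
    exact ⟨p.2, by simp [Finset.mem_filter, h1, h2], rfl⟩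

lemma avoids132_inv {σ : Equiv.Perm (Fin n)} (h : Avoids132 σ) : Avoids132 σ⁻¹ := by
  rintro ⟨i1, i2, i3, h12, h23, ha, hb⟩
  exact h ⟨σ⁻¹ i1, σ⁻¹ i3, σ⁻¹ i2, ha, hb, by simpa using ⟨h12, h23⟩⟩

lemma codeF_adj {w : Equiv.Perm (Fin n)} (hw : Avoids132 w) {i i' : Fin n}
    (hii' : (i' : ℕ) = i + 1) : codeF w i' ≤ codeF w i := by
  apply Finset.card_le_card
  intro l hl
  simp only [Finset.mem_filter, Finset.mem_univ, true_and] at hl ⊢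
  have hii : i < i' := by rw [Fin.lt_def]; omega
  have hil : i < l := hii.trans hl.1
  refine ⟨hil, ?_⟩
  rcases lt_trichotomy (w l) (w i) with h | h | h
  · exact h
  · exact absurd (w.injective h) (ne_of_gt hil)
  · exact absurd ⟨i, i', l, hii, hl.1, h, hl.2⟩ hw

lemma codeF_antitone {w : Equiv.Perm (Fin n)} (hw : Avoids132 w) {i j : Fin n}
    (hij : i ≤ j) : codeF w j ≤ codeF w i := by
  set g : ℕ → ℕ := fun m => if h : m < n then codeF w ⟨m, h⟩ else 0 with hg
  have hanti : Antitone g := by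
    apply antitone_nat_of_succ_le
    intro m
    by_cases h1 : m + 1 < n
    · have h2 : m < n := by omega
      simp only [hg, dif_pos h1, dif_pos h2]
      exact codeF_adj hw rfl
    · simp only [hg, dif_neg h1]
      exact Nat.zero_le _
  have e1 : codeF w i = g i := by simp [hg, i.isLt]
  have e2 : codeF w j = g j := by simp [hg, j.isLt]
  rw [e1, e2]
  exact hanti hij

lemma avoids_of_antitone {w : Equiv.Perm (Fin n)}
    (hd : ∀ i j : Fin n, i ≤ j → codeF w j ≤ codeF w i) : Avoids132 w := by
  rintro ⟨i1, i2, i3, h12, h23, ha, hb⟩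
  have key : ∀ d : ℕ, ∀ i1 i2 i3 : Fin n, (i2 : ℕ) - i1 ≤ d → i1 < i2 → i2 < i3 →
      w i1 < w i3 → w i3 < w i2 → False := by
    intro d
    induction d with
    | zero => intro i1 i2 i3 hle h12 _ _ _; rw [Fin.lt_def] at h12; omega
    | succ d ih =>
      intro i1 i2 i3 hle h12 h23 ha hb
      by_cases hadj : (i2 : ℕ) = i1 + 1
      · have hsub : insert i3 (Finset.univ.filter (fun l => i1 < l ∧ w l < w i1)) ⊆
            Finset.univ.filter (fun l => i2 < l ∧ w l < w i2) := by
          intro l hl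
          simp only [Finset.mem_insert, Finset.mem_filter, Finset.mem_univ, true_and] at hl ⊢
          rcases hl with rfl | ⟨h1, h2⟩
          · exact ⟨h23, hb⟩
          · have hne : l ≠ i2 := by
              intro e; subst e; exact absurd h2 (not_lt.mpr (le_of_lt (ha.trans hb)))
            constructor
            · rw [Fin.lt_def] at h1 ⊢
              have : (l : ℕ) ≠ (i2 : ℕ) := fun hc => hne (Fin.ext hc)
              omega
            · exact h2.trans (ha.trans hb)
        have hnotmem : i3 ∉ Finset.univ.filter (fun l => i1 < l ∧ w l < w i1) := by
          simp only [Finset.mem_filter, Finset.mem_univ, true_and, not_and]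
          intro _; exact not_lt.mpr (le_of_lt ha)
        have hcard := Finset.card_le_card hsub
        rw [Finset.card_insert_of_notMem hnotmem] at hcard
        have := hd i1 i2 (le_of_lt h12)
        simp only [codeF] at this
        omega
      · have hj : (i1 : ℕ) + 1 < n := by
          have := i2.isLt; rw [Fin.lt_def] at h12; omega
        set j : Fin n := ⟨i1 + 1, hj⟩ with hjdef
        have hlt1 : i1 < j := by rw [Fin.lt_def]; simp [hjdef]
        have hlt2 : j < i2 := by rw [Fin.lt_def] at h12 ⊢; simp [hjdef]; omega
        rcases lt_trichotomy (w i3) (w j) with h | h | h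
        · exact ih i1 j i3 (by rw [Fin.lt_def] at *; simp [hjdef]; omega) hlt1
            (hlt2.trans h23) ha h
        · exact absurd (w.injective h) (ne_of_gt (hlt2.trans h23))
        · exact ih j i2 i3 (by rw [Fin.lt_def] at *; simp [hjdef]; omega) hlt2 h23 h hb
  exact key ((i2 : ℕ) - i1) i1 i2 i3 le_rfl h12 h23 ha hb

def extPerm (c : Fin (n + 1)) (w' : Equiv.Perm (Fin n)) : Equiv.Perm (Fin (n + 1)) :=
  (finSuccEquiv n).trans (w'.optionCongr.trans (finSuccEquiv' c).symm)

@[simp] lemma extPerm_zero (c : Fin (n + 1)) (w' : Equiv.Perm (Fin n)) :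
    extPerm c w' 0 = c := by
  simp [extPerm]

@[simp] lemma extPerm_succ (c : Fin (n + 1)) (w' : Equiv.Perm (Fin n)) (i : Fin n) :
    extPerm c w' i.succ = c.succAbove (w' i) := by
  simp [extPerm]

lemma codeF_zero (w : Equiv.Perm (Fin (n + 1))) : codeF w 0 = (w 0 : ℕ) := by
  rw [codeF]
  have h1 : (Finset.univ.filter (fun l : Fin (n+1) => (0 : Fin (n+1)) < l ∧ w l < w 0)) =
      Finset.univ.filter (fun l => w l < w 0) := by
    apply Finset.filter_congr
    intro l _
    simp only [and_iff_right_iff_imp]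
    intro hl
    exact Fin.pos_of_ne_zero (fun h => by rw [h] at hl; exact lt_irrefl _ hl)
  rw [h1]
  have h2 : (Finset.univ.filter (fun l : Fin (n+1) => w l < w 0)).card =
      (Finset.univ.filter (fun v : Fin (n+1) => v < w 0)).card := by
    apply Finset.card_bij (fun l _ => w l)
    · intro l hl; simp only [Finset.mem_filter, Finset.mem_univ, true_and] at hl ⊢; exact hl
    · intro a _ b _ hab; exact w.injective hab
    · intro v hv
      simp only [Finset.mem_filter, Finset.mem_univ, true_and] at hv
      exact ⟨w⁻¹ v, by simp [Finset.mem_filter, hv], by simp⟩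
  rw [h2]
  have h3 : Finset.univ.filter (fun v : Fin (n+1) => v < w 0) = Finset.Iio (w 0) := by
    ext v; simp
  rw [h3, Fin.card_Iio]

lemma codeF_extPerm_zero (c : Fin (n + 1)) (w' : Equiv.Perm (Fin n)) :
    codeF (extPerm c w') 0 = (c : ℕ) := by
  rw [codeF_zero, extPerm_zero]

lemma codeF_extPerm_succ (c : Fin (n + 1)) (w' : Equiv.Perm (Fin n)) (i : Fin n) :
    codeF (extPerm c w') i.succ = codeF w' i := by
  rw [codeF, codeF]
  symm
  apply Finset.card_bij (fun l _ => Fin.succ l)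
  · intro l hl
    simp only [Finset.mem_filter, Finset.mem_univ, true_and] at hl ⊢
    refine ⟨by simpa [Fin.succ_lt_succ_iff] using hl.1, ?_⟩
    rw [extPerm_succ, extPerm_succ]
    exact (Fin.succAbove_lt_succAbove_iff).mpr hl.2
  · intro a _ b _ hab; exact Fin.succ_injective _ hab
  · intro l hl
    simp only [Finset.mem_filter, Finset.mem_univ, true_and] at hl
    have hl0 : l ≠ 0 := by
      intro h; subst h; exact absurd hl.1 (by simp [Fin.lt_def])
    obtain ⟨m, rfl⟩ := Fin.exists_succ_eq.mpr hl0
    refine ⟨m, ?_, rfl⟩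
    simp only [Finset.mem_filter, Finset.mem_univ, true_and]
    constructor
    · simpa [Fin.succ_lt_succ_iff] using hl.1
    · have := hl.2
      rw [extPerm_succ, extPerm_succ] at this
      exact (Fin.succAbove_lt_succAbove_iff).mp this

lemma exists_extPerm (w : Equiv.Perm (Fin (n + 1))) :
    ∃ (c : Fin (n + 1)) (w' : Equiv.Perm (Fin n)), w = extPerm c w' := by
  set c := w 0 with hc
  set e : Option (Fin n) ≃ Option (Fin n) :=
    ((finSuccEquiv n).symm.trans w).trans (finSuccEquiv' c) with he
  have henone : e none = none := by
    simp [he, ← hc, finSuccEquiv'_at]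
  refine ⟨c, e.removeNone, Equiv.ext fun x => ?_⟩
  refine Fin.cases ?_ ?_ x
  · simp [← hc]
  · intro i
    rw [extPerm_succ]
    have hsome : e (some i) = some (e.removeNone i) := by
      rcases h : e (some i) with _ | a
      · exact absurd (e.injective (h.trans henone.symm)) (by simp)
      · rw [Equiv.removeNone_some e ⟨a, h⟩]; exact h.symm
    have : finSuccEquiv' c (w i.succ) = some (e.removeNone i) := by
      rw [← hsome]; simp [he]
    have := congrArg (finSuccEquiv' c).symm this
    simpa using this

lemma codeF_injective : ∀ {n : ℕ} (w v : Equiv.Perm (Fin n)),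
    (∀ i, codeF w i = codeF v i) → w = v := by
  intro n
  induction n with
  | zero => intro w v _; ext x; exact absurd x.isLt (by omega)
  | succ n ih =>
    intro w v h
    obtain ⟨c, w', rfl⟩ := exists_extPerm w
    obtain ⟨d, v', rfl⟩ := exists_extPerm v
    have hcd : c = d := by
      have := h 0
      rw [codeF_extPerm_zero, codeF_extPerm_zero] at this
      exact Fin.ext this
    subst hcd
    have : w' = v' := by
      apply ih
      intro i
      have := h i.succ
      rwa [codeF_extPerm_succ, codeF_extPerm_succ] at this
    rw [this]

lemma exists_code : ∀ {n : ℕ} (lam : Fin n → ℕ), (∀ i, lam i ≤ n - 1 - (i : ℕ)) →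
    ∃ w : Equiv.Perm (Fin n), ∀ i, codeF w i = lam i := by
  intro n
  induction n with
  | zero => intro lam _; exact ⟨1, fun i => absurd i.isLt (by omega)⟩
  | succ n ih =>
    intro lam hlam
    have hc : lam 0 ≤ n := by have := hlam 0; simpa using this
    set c : Fin (n + 1) := ⟨lam 0, by omega⟩ with hcdef
    obtain ⟨w', hw'⟩ := ih (fun i => lam i.succ) (by
      intro i
      have := hlam i.succ
      simp only [Fin.val_succ] at this
      show lam i.succ ≤ n - 1 - (i : ℕ)
      omega)
    refine ⟨extPerm c w', ?_⟩
    intro i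
    refine Fin.cases ?_ ?_ i
    · rw [codeF_extPerm_zero]
    · intro j
      rw [codeF_extPerm_succ, hw' j]

lemma codeF_le (w : Equiv.Perm (Fin n)) (i : Fin n) : codeF w i ≤ n - 1 - (i : ℕ) := by
  rw [codeF, ← Fin.card_Ioi]
  apply Finset.card_le_card
  intro l hl
  simp only [Finset.mem_filter, Finset.mem_univ, true_and, Finset.mem_Ioi] at hl ⊢
  exact hl.1

end AuxCode

/-- the map sending a 132-avoiding `σ ∈ S_n` to the row lengths of its Rothe
diagram is a bijection onto the partitions contained in the staircase `(n-1, …, 1)`, and it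
sends the number of inversions to the size of the partition. -/
theorem bijection_avoids132_partitions (n : ℕ) :
    Set.BijOn (fun σ : Equiv.Perm (Fin n) => fun i : Fin n => {j : Fin n | (i, j) ∈ rothe σ}.ncard)
      {σ : Equiv.Perm (Fin n) | Avoids132 σ}
      {lam : Fin n → ℕ | (∀ i j : Fin n, i ≤ j → lam j ≤ lam i) ∧
        ∀ i : Fin n, lam i ≤ n - 1 - (i : ℕ)} ∧
    ∀ σ : Equiv.Perm (Fin n), Avoids132 σ →
      ∑ i : Fin n, {j : Fin n | (i, j) ∈ rothe σ}.ncard = invNum σ := by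
  have hrow : ∀ (σ : Equiv.Perm (Fin n)) (i : Fin n),
      {j : Fin n | (i, j) ∈ rothe σ}.ncard = codeF σ⁻¹ i := rowLen_eq
  constructor
  · refine ⟨?_, ?_, ?_⟩
    · intro σ hσ
      simp only [Set.mem_setOf_eq] at hσ ⊢
      have hinv : Avoids132 σ⁻¹ := avoids132_inv hσ
      constructor
      · intro i j hij
        rw [hrow, hrow]
        exact codeF_antitone hinv hij
      · intro i
        rw [hrow]
        exact codeF_le _ _
    · intro σ hσ τ hτ h
      have : σ⁻¹ = τ⁻¹ := by
        apply codeF_injective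
        intro i
        have h' := congrFun h i
        simp only at h'
        rw [hrow, hrow] at h'
        exact h'
      exact inv_injective this
    · intro lam hlam
      obtain ⟨hdec, hbd⟩ := hlam
      obtain ⟨w, hw⟩ := exists_code lam hbd
      have hav : Avoids132 w :=
        avoids_of_antitone (fun i j hij => by rw [hw, hw]; exact hdec i j hij)
      refine ⟨w⁻¹, avoids132_inv hav, ?_⟩
      funext i
      simp only
      rw [hrow]
      simp only [inv_inv]
      exact hw i
  · intro σ _
    calc ∑ i : Fin n, {j : Fin n | (i, j) ∈ rothe σ}.ncard
        = ∑ i : Fin n, codeF σ⁻¹ i := by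
          exact Finset.sum_congr rfl (fun i _ => hrow σ i)
      _ = invF σ⁻¹ := sum_codeF _
      _ = invF σ := invF_inv _
      _ = invNum σ := (invNum_eq_invF _).symm
end

section
/- If P is a Young tableau with strictly increasing rows and strictly increasing columns, then Edelman–Greene insertion of its reading word r(P) (reading rows left to right, from the bottom row up) reproduces P, i.e., P(r(P)) = P. -/
/-!
Insert the reading word row by row from the bottom. By induction the lower rows `rs` are rebuilt
first. Then the letters `v₀ < v₁ < ⋯` of the top row `v` are inserted: by row strictness `vⱼ`
exceeds everything to its left, and by column strictness each entry of column `j` is smaller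
than the one below it, so `vⱼ` pushes column `j` down by one row. After all of `v` is inserted,
`v` sits on top of `rs`.
-/

def insWord (w : List ℕ) (T : List (List ℕ)) : List (List ℕ) :=
  w.foldl (fun t x => insTab x t) T

theorem Ptab_eq_insWord (w : List ℕ) : Ptab w = insWord w [] := rfl

theorem insWord_append (u v : List ℕ) (T : List (List ℕ)) :
    insWord (u ++ v) T = insWord v (insWord u T) :=
  List.foldl_append

theorem insWord_concat (w : List ℕ) (x : ℕ) (T : List (List ℕ)) :
    insWord (w ++ [x]) T = insTab x (insWord w T) := by
  rw [insWord_append]; rfl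

theorem insRow_of_forall_lt {x : ℕ} {l : List ℕ} (h : ∀ y ∈ l, y < x) :
    insRow x l = (l ++ [x], none) := by
  induction l with
  | nil => rfl
  | cons a l ih =>
    simp only [List.mem_cons, forall_eq_or_imp] at h
    simp [insRow, h.1, ih h.2]

theorem insRow_append_cons {x b : ℕ} {a c : List ℕ} (ha : ∀ y ∈ a, y < x) (hb : x < b) :
    insRow x (a ++ b :: c) = (a ++ x :: c, some b) := by
  induction a with
  | nil => simp [insRow, hb.not_gt, hb.ne']
  | cons z a ih =>
    simp only [List.mem_cons, forall_eq_or_imp] at ha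
    simp [insRow, ha.1, ih ha.2]

theorem insTab_cons_of_insRow_eq_none {x : ℕ} {r l : List ℕ} {rs : List (List ℕ)}
    (h : insRow x r = (l, none)) : insTab x (r :: rs) = l :: rs := by
  simp [insTab, h]

theorem insTab_cons_of_insRow_eq_some {x y : ℕ} {r l : List ℕ} {rs : List (List ℕ)}
    (h : insRow x r = (l, some y)) : insTab x (r :: rs) = l :: insTab y rs := by
  simp [insTab, h]

theorem List.Pairwise.rel_getElem_of_mem_take {α : Type*} {R : α → α → Prop} {l : List α}
    (hl : l.Pairwise R) {j : ℕ} (hj : j < l.length) {y : α} (hy : y ∈ l.take j) : R y l[j] :=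
  hl.rel_of_mem_take_of_mem_drop hy (by rw [List.drop_eq_getElem_cons hj]; exact List.mem_cons_self)

section Tableau

variable {v r : List ℕ} {rs : List (List ℕ)}

theorem TabShape.tail (h : TabShape (v :: rs)) : TabShape rs :=
  ⟨fun r hr => h.1 r (List.mem_cons_of_mem _ hr), fun i hi => by
    simpa using h.2 (i + 1) (by simpa using hi)⟩

theorem TabShape.length_le (h : TabShape (v :: r :: rs)) : r.length ≤ v.length := by
  simpa using h.2 0 (by simp)

structure IsStrictTableau (P : List (List ℕ)) : Prop where
  shape : TabShape P
  row : RowStrict P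
  col : ColStrict P

namespace IsStrictTableau

theorem tail (h : IsStrictTableau (v :: rs)) : IsStrictTableau rs where
  shape := h.shape.tail
  row r hr := h.row r (List.mem_cons_of_mem _ hr)
  col i j hi hj := by simpa using h.col (i + 1) j (by simpa using hi) (by simpa using hj)

theorem head_pairwise (h : IsStrictTableau (v :: rs)) : v.Pairwise (· < ·) :=
  h.row v List.mem_cons_self

theorem getElem_lt_getElem (h : IsStrictTableau (v :: r :: rs)) {j : ℕ} (hj : j < r.length)
    (hjv : j < v.length) : v[j] < r[j] := by
  have := h.col 0 j (by simp) (by simpa using hj)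
  simp only [List.getD_cons_zero, List.getD_cons_succ] at this
  rwa [List.getD_eq_getElem _ _ hj, List.getD_eq_getElem _ _ hjv] at this

end IsStrictTableau

end Tableau

/-- The tableau `v :: rs` with its first `j` columns slid one row down: the first `j` entries of
each row replace those of the row below (a new bottom row appears if `j > 0`), and the rest of
`v` is dropped. -/
def slideDown (j : ℕ) : List ℕ → List (List ℕ) → List (List ℕ)
  | v, [] => if j = 0 then [] else [v.take j]
  | v, r :: rs => (v.take j ++ r.drop j) :: slideDown j r rs

theorem slideDown_zero (v : List ℕ) (rs : List (List ℕ)) : slideDown 0 v rs = rs := by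
  induction rs generalizing v with
  | nil => rfl
  | cons r rs ih => simp [slideDown, ih]

theorem slideDown_of_length_le {j : ℕ} {v : List ℕ} {rs : List (List ℕ)}
    (h : TabShape (v :: rs)) (hj : v.length ≤ j) : slideDown j v rs = v :: rs := by
  induction rs generalizing v with
  | nil =>
    have hv : v ≠ [] := h.1 v List.mem_cons_self
    have : j ≠ 0 := by have := List.length_pos_iff.mpr hv; omega
    simp [slideDown, this, List.take_of_length_le hj]
  | cons r rs ih =>
    have hr := h.length_le
    rw [slideDown, ih h.tail (hr.trans hj), List.take_of_length_le hj,
      List.drop_eq_nil_of_le (hr.trans hj), List.append_nil]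

theorem insTab_slideDown {j : ℕ} {v : List ℕ} {rs : List (List ℕ)}
    (h : IsStrictTableau (v :: rs)) (hj : j < v.length) :
    insTab v[j] (slideDown j v rs) = slideDown (j + 1) v rs := by
  have hleft : ∀ y ∈ v.take j, y < v[j] := fun _ ↦ h.head_pairwise.rel_getElem_of_mem_take hj
  induction rs generalizing v with
  | nil =>
    cases j with
    | zero => simp [slideDown, insTab, List.take_one, List.head?_eq_getElem?, hj]
    | succ j =>
      simp only [slideDown, Nat.add_one_ne_zero, if_false]
      rw [insTab_cons_of_insRow_eq_none (insRow_of_forall_lt hleft),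
        List.take_succ_eq_append_getElem hj]
  | cons r rs ih =>
    simp only [slideDown]
    by_cases hjr : j < r.length
    · rw [List.drop_eq_getElem_cons hjr,
        insTab_cons_of_insRow_eq_some (insRow_append_cons hleft (h.getElem_lt_getElem hjr hj)),
        ih h.tail hjr (fun _ ↦ h.tail.head_pairwise.rel_getElem_of_mem_take hjr),
        List.take_succ_eq_append_getElem hj, List.append_assoc, List.singleton_append]
    · have hrj : r.length ≤ j := not_lt.mp hjr
      rw [List.drop_eq_nil_of_le hrj, List.drop_eq_nil_of_le (hrj.trans j.le_succ),
        List.append_nil, List.append_nil,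
        insTab_cons_of_insRow_eq_none (insRow_of_forall_lt hleft),
        slideDown_of_length_le h.tail.shape hrj,
        slideDown_of_length_le h.tail.shape (hrj.trans j.le_succ),
        List.take_succ_eq_append_getElem hj]

theorem insWord_take_eq_slideDown {v : List ℕ} {rs : List (List ℕ)}
    (h : IsStrictTableau (v :: rs)) {k : ℕ} (hk : k ≤ v.length) :
    insWord (v.take k) rs = slideDown k v rs := by
  induction k with
  | zero => simp [insWord, slideDown_zero]
  | succ k ih =>
    rw [List.take_succ_eq_append_getElem hk, insWord_concat, ih (by omega),
      insTab_slideDown h hk]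

theorem insWord_eq_cons {v : List ℕ} {rs : List (List ℕ)} (h : IsStrictTableau (v :: rs)) :
    insWord v rs = v :: rs := by
  simpa [slideDown_of_length_le h.shape le_rfl] using
    insWord_take_eq_slideDown h le_rfl

theorem Ptab_readingWord_general (P : List (List ℕ)) (hshape : TabShape P)
    (hrow : RowStrict P) (hcol : ColStrict P) :
    Ptab (readingWord P) = P := by
  induction P with
  | nil => rfl
  | cons v rs ih =>
    have hP : IsStrictTableau (v :: rs) := ⟨hshape, hrow, hcol⟩
    have hrs := hP.tail
    calc Ptab (readingWord (v :: rs)) = insWord v (Ptab (readingWord rs)) := by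
          simp [readingWord, Ptab_eq_insWord, insWord_append]
      _ = insWord v rs := by rw [ih hrs.shape hrs.row hrs.col]
      _ = v :: rs := insWord_eq_cons hP

/-- if `P` is a row- and column-strict Young tableau (with positive entries),
then Edelman–Greene insertion of its reading word reproduces `P`. -/
theorem Ptab_readingWord (P : List (List ℕ)) (hshape : TabShape P)
    (hrow : RowStrict P) (hcol : ColStrict P)
    (hpos : ∀ r ∈ P, ∀ x ∈ r, 1 ≤ x) :
    Ptab (readingWord P) = P :=
  Ptab_readingWord_general P hshape hrow hcol
end

section
/- If w is a reduced word for a permutation σ ∈ S_n, then the Edelman–Greene insertion tableau P(w) has strictly increasing rows and columns, and its reading word r(P(w)) is also a reduced word for σ. -/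
/-!
Every Edelman–Greene insertion step is a Coxeter move on the reading word. Inserting `x` into a
row `S` either appends it, or bumps a letter `y` and turns the word `S x` into `y S'`, where `S'`
is the new row; as the reading word lists the lower rows first, `y` then continues into the reading
word of the rows below. By induction the reading word of `P(w)` represents the same permutation as
`w` and has the same length, so it is reduced. Strictness of rows and columns holds for the
insertion of any word.
-/

namespace EdelmanGreene

open List

lemma adjT_of_valid {n a : ℕ} (h : 1 ≤ a ∧ a < n) :
    adjT n a = Equiv.swap ⟨a - 1, by omega⟩ ⟨a, h.2⟩ :=
  dif_pos h

lemma adjT_of_not_valid {n a : ℕ} (h : ¬(1 ≤ a ∧ a < n)) : adjT n a = 1 :=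
  dif_neg h

lemma val_adjT_apply {n a : ℕ} (h : 1 ≤ a ∧ a < n) (q : Fin n) :
    (adjT n a q : ℕ) = if (q : ℕ) = a - 1 then a else if (q : ℕ) = a then a - 1 else q := by
  rw [adjT_of_valid h, Equiv.swap_apply_def]
  split_ifs <;> simp only [Fin.ext_iff] at * <;> omega

lemma adjT_mul_self (n a : ℕ) : adjT n a * adjT n a = 1 := by
  by_cases h : 1 ≤ a ∧ a < n
  · rw [adjT_of_valid h, Equiv.swap_mul_self]
  · rw [adjT_of_not_valid h, mul_one]

lemma adjT_inv (n a : ℕ) : (adjT n a)⁻¹ = adjT n a :=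
  inv_eq_of_mul_eq_one_right (adjT_mul_self n a)

lemma commute_adjT {n a b : ℕ} (h : a + 2 ≤ b) : Commute (adjT n a) (adjT n b) := by
  by_cases ha : 1 ≤ a ∧ a < n
  · by_cases hb : 1 ≤ b ∧ b < n
    · rw [adjT_of_valid ha, adjT_of_valid hb]
      refine (Equiv.Perm.disjoint_swap_swap ?_).commute
      simp only [nodup_cons, nodup_nil, mem_cons, Fin.ext_iff, not_mem_nil, or_false, and_true,
        not_false_eq_true]
      omega
    · rw [adjT_of_not_valid hb]; exact Commute.one_right _
  · rw [adjT_of_not_valid ha]; exact Commute.one_left _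

lemma adjT_braid {n a : ℕ} (ha : 1 ≤ a) (hn : a + 1 < n) :
    adjT n a * adjT n (a + 1) * adjT n a = adjT n (a + 1) * adjT n a * adjT n (a + 1) := by
  rw [adjT_of_valid ⟨ha, by omega⟩, adjT_of_valid (a := a + 1) ⟨by omega, hn⟩]
  set i : Fin n := ⟨a - 1, by omega⟩
  set j : Fin n := ⟨a, by omega⟩
  set k : Fin n := ⟨a + 1, hn⟩
  have hj : (⟨a + 1 - 1, by omega⟩ : Fin n) = j := Fin.ext (by simp [j])
  have hij : i ≠ j := by simp only [ne_eq, Fin.ext_iff, i, j]; omega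
  have hik : i ≠ k := by simp only [ne_eq, Fin.ext_iff, i, k]; omega
  have hjk : j ≠ k := by simp only [ne_eq, Fin.ext_iff, j, k]; omega
  rw [hj, Equiv.swap_mul_swap_mul_swap hij hik, Equiv.swap_comm i j, Equiv.swap_comm j k,
    Equiv.swap_mul_swap_mul_swap hjk.symm hik.symm, Equiv.swap_comm]

@[simp] lemma permOfWord_nil (n : ℕ) : permOfWord n [] = 1 := rfl

@[simp] lemma permOfWord_cons (n a : ℕ) (w : List ℕ) :
    permOfWord n (a :: w) = adjT n a * permOfWord n w := by
  simp [permOfWord]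

@[simp] lemma permOfWord_append (n : ℕ) (u v : List ℕ) :
    permOfWord n (u ++ v) = permOfWord n u * permOfWord n v := by
  simp [permOfWord]

lemma permOfWord_reverse (n : ℕ) (w : List ℕ) :
    permOfWord n w.reverse = (permOfWord n w)⁻¹ := by
  simp only [permOfWord, map_reverse, prod_reverse_noncomm, map_map]
  congr 2
  exact map_congr_left fun a _ => adjT_inv n a

lemma commute_adjT_permOfWord {n a : ℕ} {B : List ℕ} (h : ∀ b ∈ B, a + 2 ≤ b) :
    Commute (adjT n a) (permOfWord n B) := by
  induction B with
  | nil => exact Commute.one_right _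
  | cons b B ih =>
    rw [permOfWord_cons]
    exact (commute_adjT (h b mem_cons_self)).mul_right (ih fun c hc => h c (mem_cons_of_mem _ hc))

lemma invNum_one (n : ℕ) : invNum (1 : Equiv.Perm (Fin n)) = 0 := by
  rw [invNum, Set.ncard_eq_zero]
  exact Set.eq_empty_of_forall_notMem fun p hp => lt_asymm hp.1 hp.2

lemma invNum_inv_le {n : ℕ} (σ : Equiv.Perm (Fin n)) : invNum σ⁻¹ ≤ invNum σ := by
  have hsub : invSet σ⁻¹ ⊆ (fun p => (σ p.2, σ p.1)) '' invSet σ := by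
    rintro ⟨a, b⟩ ⟨hab, hba⟩
    refine ⟨(σ⁻¹ b, σ⁻¹ a), ⟨hba, ?_⟩, by simp⟩
    simpa using hab
  exact (Set.ncard_le_ncard hsub (Set.toFinite _)).trans (Set.ncard_image_le (Set.toFinite _))

lemma invNum_inv {n : ℕ} (σ : Equiv.Perm (Fin n)) : invNum σ⁻¹ = invNum σ :=
  le_antisymm (invNum_inv_le σ) (by simpa using invNum_inv_le σ⁻¹)

/-- The only inversion `σ * s_a` can have beyond those of `σ`, transported by `s_a`, is the
pair `(a - 1, a)`. -/
lemma invNum_mul_adjT_le {n : ℕ} (σ : Equiv.Perm (Fin n)) (a : ℕ) :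
    invNum (σ * adjT n a) ≤ invNum σ + 1 := by
  by_cases ha : 1 ≤ a ∧ a < n
  · let i : Fin n := ⟨a - 1, by omega⟩
    let j : Fin n := ⟨a, ha.2⟩
    let s := adjT n a
    have hsub : invSet (σ * s) ⊆ Equiv.prodCongr s s '' invSet σ ∪ {(i, j)} := by
      rintro ⟨p, q⟩ ⟨hpq, hinv⟩
      by_cases hij : p = i ∧ q = j
      · simp [hij]
      · refine Or.inl ⟨(s p, s q), ⟨?_, hinv⟩, ?_⟩
        · simp only [Fin.ext_iff, i, j] at hij
          simp only [s, Fin.lt_def, val_adjT_apply ha] at hpq ⊢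
          split_ifs <;> omega
        · simp [← Equiv.Perm.mul_apply, s, adjT_mul_self]
    calc invNum (σ * s) ≤ (Equiv.prodCongr s s '' invSet σ ∪ {(i, j)}).ncard :=
          Set.ncard_le_ncard hsub (Set.toFinite _)
      _ ≤ (Equiv.prodCongr s s '' invSet σ).ncard + ({(i, j)} : Set _).ncard :=
          Set.ncard_union_le _ _
      _ = invNum σ + 1 := by
          rw [Set.ncard_image_of_injective _ (Equiv.injective _), Set.ncard_singleton, invNum]
  · rw [adjT_of_not_valid ha, mul_one]
    omega

lemma invNum_mul_permOfWord_le {n : ℕ} (σ : Equiv.Perm (Fin n)) (w : List ℕ) :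
    invNum (σ * permOfWord n w) ≤ invNum σ + w.length := by
  induction w generalizing σ with
  | nil => simp
  | cons a w ih =>
    rw [permOfWord_cons, ← mul_assoc, length_cons]
    have := invNum_mul_adjT_le σ a
    have := ih (σ * adjT n a)
    omega

lemma invNum_permOfWord_le (n : ℕ) (w : List ℕ) : invNum (permOfWord n w) ≤ w.length := by
  simpa [invNum_one] using invNum_mul_permOfWord_le (1 : Equiv.Perm (Fin n)) w

def IsReduced (n : ℕ) (w : List ℕ) : Prop :=
  invNum (permOfWord n w) = w.length

namespace IsReduced

variable {n : ℕ} {u v w : List ℕ}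

lemma of_append_left (h : IsReduced n (u ++ v)) : IsReduced n u := by
  have h₁ := invNum_mul_permOfWord_le (permOfWord n u) v
  have h₂ := invNum_permOfWord_le n u
  rw [← permOfWord_append, h, length_append] at h₁
  unfold IsReduced
  omega

lemma reverse (h : IsReduced n w) : IsReduced n w.reverse := by
  rwa [IsReduced, permOfWord_reverse, invNum_inv, length_reverse]

lemma of_append_right (h : IsReduced n (u ++ v)) : IsReduced n v := by
  have h' : IsReduced n (v.reverse ++ u.reverse) := by simpa using h.reverse
  simpa using h'.of_append_left.reverse

lemma of_permOfWord_eq (h : IsReduced n u) (hperm : permOfWord n v = permOfWord n u)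
    (hlen : v.length = u.length) : IsReduced n v := by
  rwa [IsReduced, hperm, hlen]

/-- A letter outside `[1, n)` acts trivially, so deleting it would shorten the word. -/
lemma valid_of_mem (h : IsReduced n w) {a : ℕ} (ha : a ∈ w) : 1 ≤ a ∧ a < n := by
  by_contra hinv
  obtain ⟨s, t, rfl⟩ := append_of_mem ha
  have hle := invNum_permOfWord_le n (s ++ t)
  simp only [IsReduced, permOfWord_append, permOfWord_cons, adjT_of_not_valid hinv, one_mul,
    length_append, length_cons] at h hle
  omega

end IsReduced

lemma isReducedWord_iff {n : ℕ} {σ : Equiv.Perm (Fin n)} {w : List ℕ} :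
    IsReducedWord n σ w ↔ permOfWord n w = σ ∧ IsReduced n w := by
  constructor
  · rintro ⟨-, hperm, hlen⟩
    exact ⟨hperm, by rw [IsReduced, hperm, hlen]⟩
  · rintro ⟨hperm, hred⟩
    exact ⟨fun a ha => hred.valid_of_mem ha, hperm, by rw [← hperm, hred]⟩

lemma not_isReduced_cons_append_singleton {n a : ℕ} {B : List ℕ}
    (hB : ∀ b ∈ B, a + 2 ≤ b) :
    ¬IsReduced n (a :: B ++ [a]) := by
  intro h
  have hperm : permOfWord n (a :: B ++ [a]) = permOfWord n B := by
    simp only [cons_append, permOfWord_cons, permOfWord_append, ← (commute_adjT_permOfWord hB).eq,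
      ← mul_assoc, adjT_mul_self, one_mul, permOfWord_nil, mul_one]
  have hle := invNum_permOfWord_le n B
  rw [IsReduced, hperm, length_append, length_cons, length_singleton] at h
  omega

/-- The column into which `insRow x S` writes `x`. -/
def insPos (x : ℕ) (S : List ℕ) : ℕ :=
  (S.takeWhile (· < x)).length

section insRow

variable {x y : ℕ} {S : List ℕ}

@[simp] lemma insPos_nil : insPos x [] = 0 := rfl

lemma insPos_cons_of_lt {z : ℕ} (h : z < x) : insPos x (z :: S) = insPos x S + 1 := by
  simp [insPos, h]

lemma insPos_cons_of_not_lt {z : ℕ} (h : ¬z < x) : insPos x (z :: S) = 0 := by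
  simp [insPos, h]

lemma insPos_le_length : insPos x S ≤ S.length :=
  (S.takeWhile_sublist _).length_le

lemma getD_lt_of_lt_insPos {j : ℕ} (hj : j < insPos x S) : S.getD j 0 < x := by
  induction S generalizing j with
  | nil => simp at hj
  | cons z zs ih =>
    by_cases hz : z < x
    · rw [insPos_cons_of_lt hz] at hj
      cases j with
      | zero => simpa using hz
      | succ j => exact ih (by omega)
    · simp [insPos_cons_of_not_lt hz] at hj

lemma le_getD_insPos (h : insPos x S < S.length) : x ≤ S.getD (insPos x S) 0 := by
  induction S with
  | nil => simp at h
  | cons z zs ih =>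
    by_cases hz : z < x
    · rw [insPos_cons_of_lt hz] at h ⊢
      simpa using ih (by simpa using h)
    · simp only [insPos_cons_of_not_lt hz, getD_cons_zero]
      omega

lemma insPos_le_of_le_getD {j : ℕ} (h : x ≤ S.getD j 0) : insPos x S ≤ j := by
  by_contra! hj
  exact absurd (getD_lt_of_lt_insPos hj) (not_lt.2 h)

lemma length_insRow_fst : (insRow x S).1.length = max S.length (insPos x S + 1) := by
  induction S with
  | nil => simp [insRow]
  | cons z zs ih =>
    unfold insRow
    split_ifs with h₁ h₂
    · simp [insPos_cons_of_lt h₁, ih]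
    all_goals simp [insPos_cons_of_not_lt h₁]

lemma getD_insRow_fst (j : ℕ) :
    (insRow x S).1.getD j 0 = if j = insPos x S then x else S.getD j 0 := by
  induction S generalizing j with
  | nil => cases j <;> simp [insRow]
  | cons z zs ih =>
    by_cases h₁ : z < x
    · rw [insPos_cons_of_lt h₁]
      cases j with
      | zero => simp [insRow, h₁]
      | succ j => simpa [insRow, h₁] using ih j
    · rw [insPos_cons_of_not_lt h₁]
      by_cases h₂ : z = x
      · subst h₂
        cases j <;> simp [insRow]
      · cases j <;> simp [insRow, h₁, h₂]

lemma insRow_fst_of_snd_eq_none (h : (insRow x S).2 = none) : (insRow x S).1 = S ++ [x] := by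
  induction S with
  | nil => rfl
  | cons z zs ih =>
    unfold insRow at h ⊢
    split_ifs at h ⊢ with h₁
    simpa using ih h

lemma insRow_snd_eq_some (h : (insRow x S).2 = some y) :
    insPos x S < S.length ∧ x < y ∧ y ≤ S.getD (insPos x S) 0 + 1 := by
  induction S with
  | nil => simp [insRow] at h
  | cons z zs ih =>
    unfold insRow at h
    split_ifs at h with h₁ h₂
    · simpa [insPos_cons_of_lt h₁] using ih h
    all_goals
      simp only [Option.some.injEq] at h
      simp only [insPos_cons_of_not_lt h₁, length_cons, getD_cons_zero]
      omega

lemma length_insRow_fst_of_snd_eq_some (h : (insRow x S).2 = some y) :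
    (insRow x S).1.length = S.length := by
  rw [length_insRow_fst, max_eq_left (insRow_snd_eq_some h).1]

lemma mem_insRow_fst {a : ℕ} (ha : a ∈ (insRow x S).1) : a ∈ S ∨ a = x := by
  induction S with
  | nil => simpa [insRow] using ha
  | cons z zs ih =>
    unfold insRow at ha
    split_ifs at ha with h₁ h₂
    · rcases mem_cons.1 ha with rfl | ha
      · exact Or.inl mem_cons_self
      · exact (ih ha).imp_left (mem_cons_of_mem z)
    · exact Or.inl ha
    · rcases mem_cons.1 ha with rfl | ha
      exacts [Or.inr rfl, Or.inl (mem_cons_of_mem z ha)]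

lemma pairwise_insRow_fst (hS : S.Pairwise (· < ·)) : (insRow x S).1.Pairwise (· < ·) := by
  induction S with
  | nil => simp [insRow]
  | cons z zs ih =>
    rw [pairwise_cons] at hS
    unfold insRow
    split_ifs with h₁ h₂
    · refine pairwise_cons.2 ⟨fun a ha => ?_, ih hS.2⟩
      rcases mem_insRow_fst ha with ha | rfl
      exacts [hS.1 a ha, h₁]
    · exact pairwise_cons.2 hS
    · exact pairwise_cons.2 ⟨fun a ha => by have := hS.1 a ha; omega, hS.2⟩

end insRow

/-- In a strictly increasing row `z :: zs`, `z + 1` must follow `z` if `z zs z` is reduced: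
otherwise every letter of `zs` commutes with `z`. -/
lemma IsReduced.exists_eq_succ_cons {n z : ℕ} {zs : List ℕ} (hS : (z :: zs).Pairwise (· < ·))
    (hred : IsReduced n (z :: zs ++ [z])) :
    ∃ B, zs = (z + 1) :: B ∧ ∀ b ∈ B, z + 2 ≤ b := by
  rcases zs with _ | ⟨z₁, B⟩
  · exact absurd hred (not_isReduced_cons_append_singleton (by simp))
  simp only [pairwise_cons, mem_cons, forall_eq_or_imp] at hS
  obtain ⟨⟨hz₁, -⟩, hB, -⟩ := hS
  obtain rfl | hz₁' := eq_or_ne z₁ (z + 1)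
  · exact ⟨B, rfl, fun b hb => by have := hB b hb; omega⟩
  refine absurd hred (not_isReduced_cons_append_singleton fun b hb => ?_)
  rcases mem_cons.1 hb with rfl | hb
  · omega
  · have := hB b hb
    omega

/-- Inserting `x` into a row `S` and bumping `y` is a Coxeter move on the word `S x`: a far
commutation when a letter `y > x` is bumped, and the braid relation
`x (x+1) B x = (x+1) x (x+1) B` when `x` is already in the row. -/
lemma permOfWord_append_singleton_of_insRow {n x y : ℕ} {S : List ℕ}
    (hS : S.Pairwise (· < ·)) (hred : IsReduced n (S ++ [x])) (h : (insRow x S).2 = some y) :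
    permOfWord n (S ++ [x]) = adjT n y * permOfWord n (insRow x S).1 := by
  induction S with
  | nil => simp [insRow] at h
  | cons z zs ih =>
    rw [pairwise_cons] at hS
    by_cases hzx : z < x
    · have hy : (insRow x zs).2 = some y := by simpa [insRow, hzx] using h
      have hxy := (insRow_snd_eq_some hy).2.1
      simp only [insRow, hzx, if_true, cons_append, permOfWord_cons]
      rw [ih hS.2 (hred.of_append_right (u := [z])) hy, ← mul_assoc, ← mul_assoc,
        (commute_adjT (by omega : z + 2 ≤ y)).eq]
    obtain rfl | hzx' := eq_or_ne z x
    · obtain rfl : y = z + 1 := by simpa [insRow] using h.symm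
      obtain ⟨B, rfl, hB⟩ := hred.exists_eq_succ_cons (pairwise_cons.2 hS)
      have hz₀ : 1 ≤ z := (hred.valid_of_mem (by simp)).1
      have hz₁ : z + 1 < n := (hred.valid_of_mem (by simp)).2
      simp only [insRow, lt_irrefl, if_false, if_true, cons_append, permOfWord_cons,
        permOfWord_append, permOfWord_nil, mul_one, ← (commute_adjT_permOfWord hB).eq]
      simp only [← mul_assoc, adjT_braid hz₀ hz₁]
    · obtain rfl : y = z := by simpa [insRow, hzx, hzx'] using h.symm
      have hB : ∀ b ∈ zs, x + 2 ≤ b := fun b hb => by have := hS.1 b hb; omega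
      simp only [insRow, hzx, hzx', if_false, cons_append, permOfWord_cons, permOfWord_append,
        permOfWord_nil, mul_one, (commute_adjT_permOfWord hB).eq]

/-- Row `T` may sit directly below row `S` in a tableau with strictly increasing columns. -/
def StrictlyAbove (S T : List ℕ) : Prop :=
  T.length ≤ S.length ∧ ∀ j < T.length, S.getD j 0 < T.getD j 0

lemma StrictlyAbove.insRow_left {S T : List ℕ} (h : StrictlyAbove S T) (x : ℕ) :
    StrictlyAbove (insRow x S).1 T := by
  refine ⟨h.1.trans (by rw [length_insRow_fst]; exact le_max_left _ _), fun j hj => ?_⟩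
  rw [getD_insRow_fst]
  split_ifs with hjp
  · subst hjp
    exact (le_getD_insPos (by have := h.1; omega)).trans_lt (h.2 _ hj)
  · exact h.2 j hj

/-- The bumped letter `y` is at most one more than the entry it replaced, and the entry of the
next row in that column is larger, so `y` lands in the same column or further left. -/
lemma StrictlyAbove.insRow_bump {S T : List ℕ} {x y : ℕ} (h : StrictlyAbove S T)
    (hy : (insRow x S).2 = some y) : StrictlyAbove (insRow x S).1 (insRow y T).1 := by
  obtain ⟨hp, hxy, hyp⟩ := insRow_snd_eq_some hy
  have hqp : insPos y T ≤ insPos x S := by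
    rcases lt_or_ge (insPos x S) T.length with hpT | hpT
    · refine insPos_le_of_le_getD ?_
      have := h.2 _ hpT
      omega
    · exact insPos_le_length.trans hpT
  have hqT : insPos y T ≤ T.length := insPos_le_length
  refine ⟨?_, fun j hj => ?_⟩
  · rw [length_insRow_fst, length_insRow_fst, max_eq_left (by omega : insPos x S + 1 ≤ S.length)]
    exact max_le h.1 (by omega)
  rw [length_insRow_fst, lt_max_iff] at hj
  rw [getD_insRow_fst, getD_insRow_fst]
  split_ifs with hjp hjq hjq
  · exact hxy
  · subst hjp
    exact (le_getD_insPos hp).trans_lt (h.2 _ (by omega))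
  · exact (getD_lt_of_lt_insPos (by omega)).trans hxy
  · exact h.2 j (by omega)

lemma isChain_cons_iff {S : List ℕ} {P : List (List ℕ)} :
    (S :: P).IsChain StrictlyAbove ↔
      StrictlyAbove S (P.headD []) ∧ P.IsChain StrictlyAbove := by
  cases P with
  | nil => simp [StrictlyAbove]
  | cons T P => simp [isChain_cons_cons]

lemma insTab_cons_of_snd_eq_none {x : ℕ} {S : List ℕ} (P : List (List ℕ))
    (h : (insRow x S).2 = none) : insTab x (S :: P) = (insRow x S).1 :: P := by
  simp [insTab, h]

lemma insTab_cons_of_snd_eq_some {x y : ℕ} {S : List ℕ} (P : List (List ℕ))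
    (h : (insRow x S).2 = some y) : insTab x (S :: P) = (insRow x S).1 :: insTab y P := by
  simp [insTab, h]

lemma headD_insTab (x : ℕ) (P : List (List ℕ)) :
    (insTab x P).headD [] = (insRow x (P.headD [])).1 := by
  cases P with
  | nil => rfl
  | cons S P =>
    cases hy : (insRow x S).2 with
    | none => rw [insTab_cons_of_snd_eq_none P hy]; rfl
    | some y => rw [insTab_cons_of_snd_eq_some P hy]; rfl

lemma isChain_insTab {P : List (List ℕ)} (h : P.IsChain StrictlyAbove) (x : ℕ) :
    (insTab x P).IsChain StrictlyAbove := by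
  induction P generalizing x with
  | nil => exact isChain_singleton _
  | cons S P ih =>
    rw [isChain_cons_iff] at h
    cases hy : (insRow x S).2 with
    | none =>
      rw [insTab_cons_of_snd_eq_none P hy]
      exact isChain_cons_iff.2 ⟨h.1.insRow_left x, h.2⟩
    | some y =>
      rw [insTab_cons_of_snd_eq_some P hy]
      refine isChain_cons_iff.2 ⟨?_, ih h.2 y⟩
      rw [headD_insTab]
      exact h.1.insRow_bump hy

lemma rowStrict_insTab {P : List (List ℕ)} (h : RowStrict P) (x : ℕ) :
    RowStrict (insTab x P) := by
  induction P generalizing x with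
  | nil => simp [RowStrict, insTab]
  | cons S P ih =>
    simp only [RowStrict, mem_cons, forall_eq_or_imp] at h
    cases hy : (insRow x S).2 with
    | none =>
      rw [insTab_cons_of_snd_eq_none P hy]
      exact forall_mem_cons.2 ⟨pairwise_insRow_fst h.1, h.2⟩
    | some y =>
      rw [insTab_cons_of_snd_eq_some P hy]
      exact forall_mem_cons.2 ⟨pairwise_insRow_fst h.1, ih h.2 y⟩

lemma ne_nil_of_mem_insTab {P : List (List ℕ)} (h : ∀ r ∈ P, r ≠ []) (x : ℕ) :
    ∀ r ∈ insTab x P, r ≠ [] := by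
  induction P generalizing x with
  | nil => simp [insTab]
  | cons S P ih =>
    rw [forall_mem_cons] at h
    have hS' : (insRow x S).1 ≠ [] := by
      rw [← length_pos_iff, length_insRow_fst]
      omega
    cases hy : (insRow x S).2 with
    | none =>
      rw [insTab_cons_of_snd_eq_none P hy]
      exact forall_mem_cons.2 ⟨hS', h.2⟩
    | some y =>
      rw [insTab_cons_of_snd_eq_some P hy]
      exact forall_mem_cons.2 ⟨hS', ih h.2 y⟩

structure IsIncreasingTableau (P : List (List ℕ)) : Prop where
  rowStrict : RowStrict P
  ne_nil : ∀ r ∈ P, r ≠ []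
  isChain : P.IsChain StrictlyAbove

namespace IsIncreasingTableau

variable {P : List (List ℕ)}

lemma tabShape (h : IsIncreasingTableau P) : TabShape P := by
  refine ⟨h.ne_nil, fun i hi => ?_⟩
  rw [getD_eq_getElem _ _ hi, getD_eq_getElem _ _ (by omega)]
  exact (h.isChain.getElem i hi).1

lemma colStrict (h : IsIncreasingTableau P) : ColStrict P := by
  intro i j hi hj
  rw [getD_eq_getElem P [] hi] at hj ⊢
  rw [getD_eq_getElem P [] (by omega)]
  exact (h.isChain.getElem i hi).2 j hj

end IsIncreasingTableau

lemma isIncreasingTableau_insTab {P : List (List ℕ)} (h : IsIncreasingTableau P) (x : ℕ) :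
    IsIncreasingTableau (insTab x P) :=
  ⟨rowStrict_insTab h.rowStrict x, ne_nil_of_mem_insTab h.ne_nil x, isChain_insTab h.isChain x⟩

lemma readingWord_cons (S : List ℕ) (P : List (List ℕ)) :
    readingWord (S :: P) = readingWord P ++ S := by
  simp [readingWord]

lemma length_readingWord_insTab (x : ℕ) (P : List (List ℕ)) :
    (readingWord (insTab x P)).length = (readingWord P).length + 1 := by
  induction P generalizing x with
  | nil => rfl
  | cons S P ih =>
    cases hy : (insRow x S).2 with
    | none =>
      rw [insTab_cons_of_snd_eq_none P hy, readingWord_cons, readingWord_cons,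
        insRow_fst_of_snd_eq_none hy]
      simp only [length_append, length_singleton]
      omega
    | some y =>
      rw [insTab_cons_of_snd_eq_some P hy, readingWord_cons, readingWord_cons, length_append,
        length_append, ih, length_insRow_fst_of_snd_eq_some hy]
      omega

lemma permOfWord_readingWord_insTab {n x : ℕ} {P : List (List ℕ)} (hP : RowStrict P)
    (hred : IsReduced n (readingWord P ++ [x])) :
    permOfWord n (readingWord (insTab x P)) = permOfWord n (readingWord P ++ [x]) := by
  induction P generalizing x with
  | nil => rfl
  | cons S P ih =>
    rw [RowStrict, forall_mem_cons] at hP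
    rw [readingWord_cons, append_assoc] at hred ⊢
    cases hy : (insRow x S).2 with
    | none =>
      rw [insTab_cons_of_snd_eq_none P hy, readingWord_cons, insRow_fst_of_snd_eq_none hy]
    | some y =>
      have hrow := permOfWord_append_singleton_of_insRow hP.1 hred.of_append_right hy
      have hperm : permOfWord n (readingWord P ++ [y] ++ (insRow x S).1) =
          permOfWord n (readingWord P ++ (S ++ [x])) := by
        rw [permOfWord_append n (readingWord P) (S ++ [x]), hrow]
        simp
      have hred' : IsReduced n (readingWord P ++ [y]) :=
        (hred.of_permOfWord_eq hperm (by simp [length_insRow_fst_of_snd_eq_some hy])).of_append_left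
      rw [insTab_cons_of_snd_eq_some P hy, readingWord_cons, permOfWord_append, ih hP.2 hred',
        ← hperm, permOfWord_append n (readingWord P ++ [y])]

lemma Ptab_append_singleton (w : List ℕ) (x : ℕ) : Ptab (w ++ [x]) = insTab x (Ptab w) := by
  simp [Ptab]

lemma isIncreasingTableau_Ptab (w : List ℕ) : IsIncreasingTableau (Ptab w) := by
  induction w using reverseRecOn with
  | nil => exact ⟨by simp [RowStrict, Ptab], by simp [Ptab], isChain_nil⟩
  | append_singleton w x ih =>
    rw [Ptab_append_singleton]
    exact isIncreasingTableau_insTab ih x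

lemma length_readingWord_Ptab (w : List ℕ) : (readingWord (Ptab w)).length = w.length := by
  induction w using reverseRecOn with
  | nil => rfl
  | append_singleton w x ih =>
    rw [Ptab_append_singleton, length_readingWord_insTab, ih, length_append, length_singleton]

lemma permOfWord_readingWord_Ptab {n : ℕ} {w : List ℕ} (h : IsReduced n w) :
    permOfWord n (readingWord (Ptab w)) = permOfWord n w := by
  induction w using reverseRecOn with
  | nil => rfl
  | append_singleton w x ih =>
    have ih := ih h.of_append_left
    have hred : IsReduced n (readingWord (Ptab w) ++ [x]) :=
      h.of_permOfWord_eq (by simp [ih]) (by simp [length_readingWord_Ptab])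
    rw [Ptab_append_singleton,
      permOfWord_readingWord_insTab (isIncreasingTableau_Ptab w).rowStrict hred,
      permOfWord_append, permOfWord_append, ih]

end EdelmanGreene

open EdelmanGreene

/-- if `w` is a reduced word of `σ`, then `P(w)` is a row- and column-strict
Young tableau and its reading word is again a reduced word of `σ`. -/
theorem Ptab_strict_and_reading_reduced (n : ℕ) (σ : Equiv.Perm (Fin n)) (w : List ℕ)
    (hw : IsReducedWord n σ w) :
    TabShape (Ptab w) ∧ RowStrict (Ptab w) ∧ ColStrict (Ptab w) ∧
      IsReducedWord n σ (readingWord (Ptab w)) := by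
  obtain ⟨hperm, hred⟩ := isReducedWord_iff.1 hw
  have hP := isIncreasingTableau_Ptab w
  have hrw := permOfWord_readingWord_Ptab hred
  have hlen := length_readingWord_Ptab w
  exact ⟨hP.tabShape, hP.rowStrict, hP.colStrict,
    isReducedWord_iff.2 ⟨hrw.trans hperm, hred.of_permOfWord_eq hrw hlen⟩⟩
end

section
/- A sorting network (reduced word of the reverse permutation n(n-1)···21 in S_n) is 132-avoiding if and only if it is 312-avoiding, where a sorting network w_1...w_N is p-avoiding if every intermediate permutation s_{w_1}···s_{w_k} (1 ≤ k ≤ N) avoids the pattern p. -/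
/-!
In a reduced word every letter lengthens the prefix permutation, so it swaps an ascent
`σ b < σ c` at adjacent positions `b ⋖ c`. A 312 pattern created by such a swap either already
occurs in `σ` at the swapped positions, or has its `3` and `1` at `b` and `c`, and then `σ`
has a 132 at the same positions. Hence 132-avoidance of all prefixes carries 312-avoidance
upward from the identity. Dually, a 132 pattern destroyed by the swap leaves a 312 or a 132
behind, so 312-avoidance carries 132-avoidance downward from the reverse permutation.
-/

open Equiv

theorem swap_lt_swap_of_covBy {α : Type*} [LinearOrder α] {b c x y : α} (hbc : b ⋖ c)
    (hxy : x < y) (hne : ¬(x = b ∧ y = c)) : swap b c x < swap b c y := by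
  have hle := @hbc.le_of_lt
  have hge := @hbc.ge_of_gt
  have hlt := hbc.lt
  rw [swap_apply_def, swap_apply_def]
  split_ifs <;> grind

theorem exists_adjT_eq_swap {n a : ℕ} (ha : 1 ≤ a ∧ a < n) :
    ∃ b c : Fin n, b ⋖ c ∧ adjT n a = swap b c :=
  ⟨⟨a - 1, by omega⟩, ⟨a, ha.2⟩, Fin.covBy_iff.2 (Nat.covBy_iff_add_one_eq.2 (by simp; omega)),
    dif_pos ha⟩

theorem permOfWord_nil (n : ℕ) : permOfWord n [] = 1 := rfl

theorem permOfWord_take_succ (n : ℕ) (w : List ℕ) {k : ℕ} (hk : k < w.length) :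
    permOfWord n (w.take (k + 1)) = permOfWord n (w.take k) * adjT n w[k] := by
  rw [List.take_add_one, List.getElem?_eq_getElem hk, permOfWord, permOfWord, List.map_append,
    List.prod_append]
  simp

section Inversions

variable {n : ℕ}

theorem invNum_one : invNum (1 : Perm (Fin n)) = 0 := by
  have hempty : invSet (1 : Perm (Fin n)) = ∅ :=
    Set.eq_empty_of_forall_notMem fun _ hp => hp.1.asymm hp.2
  rw [invNum, hempty, Set.ncard_empty]

theorem invSet_mul_swap_of_covBy {σ : Perm (Fin n)} {b c : Fin n} (hbc : b ⋖ c)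
    (hasc : σ b < σ c) :
    invSet (σ * swap b c) = insert (b, c) (Prod.map (swap b c) (swap b c) '' invSet σ) := by
  ext ⟨i, j⟩
  simp only [invSet, Set.mem_insert_iff, Set.mem_image, Set.mem_ofPred_eq, Prod.mk.injEq,
    Prod.map, Perm.mul_apply, Prod.exists]
  constructor
  · rintro ⟨hij, hinv⟩
    by_cases hbc' : i = b ∧ j = c
    · exact Or.inl hbc'
    · exact Or.inr ⟨swap b c i, swap b c j, ⟨swap_lt_swap_of_covBy hbc hij hbc', by simpa⟩,
        by simp, by simp⟩
  · rintro (⟨rfl, rfl⟩ | ⟨x, y, ⟨hxy, hinv⟩, rfl, rfl⟩)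
    · simpa using ⟨hbc.lt, hasc⟩
    · have hne : ¬(x = b ∧ y = c) := by
        rintro ⟨rfl, rfl⟩
        exact hinv.asymm hasc
      simpa using ⟨swap_lt_swap_of_covBy hbc hxy hne, hinv⟩

theorem invNum_mul_swap_of_lt {σ : Perm (Fin n)} {b c : Fin n} (hbc : b ⋖ c)
    (hasc : σ b < σ c) : invNum (σ * swap b c) = invNum σ + 1 := by
  have hnotMem : (b, c) ∉ Prod.map (swap b c) (swap b c) '' invSet σ := by
    rintro ⟨⟨x, y⟩, ⟨hxy, -⟩, hxy'⟩
    simp only [Prod.map, Prod.mk.injEq, swap_apply_eq_iff, swap_apply_left,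
      swap_apply_right] at hxy'
    rw [hxy'.1, hxy'.2] at hxy
    exact hxy.asymm hbc.lt
  rw [invNum, invNum, invSet_mul_swap_of_covBy hbc hasc,
    Set.ncard_insert_of_notMem hnotMem (Set.toFinite _),
    Set.ncard_image_of_injective _ ((swap b c).injective.prodMap (swap b c).injective)]

theorem invNum_mul_swap_of_gt {σ : Perm (Fin n)} {b c : Fin n} (hbc : b ⋖ c)
    (hdesc : σ c < σ b) : invNum σ = invNum (σ * swap b c) + 1 := by
  have hasc : (σ * swap b c) b < (σ * swap b c) c := by simpa using hdesc
  simpa [mul_assoc] using invNum_mul_swap_of_lt hbc hasc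

theorem invNum_mul_adjT_le (σ : Perm (Fin n)) (a : ℕ) :
    invNum (σ * adjT n a) ≤ invNum σ + 1 := by
  by_cases ha : 1 ≤ a ∧ a < n
  · obtain ⟨b, c, hbc, hadj⟩ := exists_adjT_eq_swap ha
    rw [hadj]
    rcases lt_or_gt_of_ne (σ.injective.ne hbc.ne) with hasc | hdesc
    · exact (invNum_mul_swap_of_lt hbc hasc).le
    · have := invNum_mul_swap_of_gt hbc hdesc
      omega
  · simp [adjT, ha]

theorem invNum_permOfWord_take_le (w : List ℕ) {k m : ℕ} (hkm : k ≤ m) :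
    invNum (permOfWord n (w.take m)) ≤ invNum (permOfWord n (w.take k)) + (m - k) := by
  induction m, hkm using Nat.le_induction with
  | base => simp
  | succ m hkm ih =>
    by_cases hm : m < w.length
    · have := invNum_mul_adjT_le (permOfWord n (w.take m)) w[m]
      rw [permOfWord_take_succ n w hm]
      omega
    · rw [List.take_of_length_le (by omega : w.length ≤ m + 1)]
      rw [List.take_of_length_le (by omega : w.length ≤ m)] at ih
      omega

end Inversions

section Patterns

variable {n : ℕ} {σ : Perm (Fin n)} {b c : Fin n}

theorem avoids312_one : Avoids312 (1 : Perm (Fin n)) := by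
  rintro ⟨i, j, k, hij, hjk, -, hki⟩
  exact hki.asymm (hij.trans hjk)

theorem avoids132_revPerm : Avoids132 (Fin.revPerm : Perm (Fin n)) := by
  rintro ⟨i, j, k, hij, hjk, hik, -⟩
  simp only [Fin.revPerm_apply, Fin.rev_lt_rev] at hik
  exact hik.asymm (hij.trans hjk)

theorem avoids312_mul_swap (hbc : b ⋖ c) (hasc : σ b < σ c) (h132 : Avoids132 σ)
    (h312 : Avoids312 σ) : Avoids312 (σ * swap b c) := by
  rintro ⟨i, j, k, hij, hjk, hjk', hki⟩
  simp only [Perm.mul_apply] at hjk' hki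
  by_cases hbc_ij : i = b ∧ j = c
  · obtain ⟨rfl, rfl⟩ := hbc_ij
    rw [swap_apply_right, swap_apply_of_ne_of_ne (hij.trans hjk).ne' hjk.ne'] at hjk'
    rw [swap_apply_left, swap_apply_of_ne_of_ne (hij.trans hjk).ne' hjk.ne'] at hki
    exact h132 ⟨i, j, k, hij, hjk, hjk', hki⟩
  by_cases hbc_jk : j = b ∧ k = c
  · obtain ⟨rfl, rfl⟩ := hbc_jk
    rw [swap_apply_left, swap_apply_right] at hjk'
    exact hjk'.asymm hasc
  exact h312 ⟨_, _, _, swap_lt_swap_of_covBy hbc hij hbc_ij,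
    swap_lt_swap_of_covBy hbc hjk hbc_jk, hjk', hki⟩

theorem avoids132_of_mul_swap (hbc : b ⋖ c) (hasc : σ b < σ c)
    (h132 : Avoids132 (σ * swap b c)) (h312 : Avoids312 (σ * swap b c)) : Avoids132 σ := by
  rintro ⟨i, j, k, hij, hjk, hik, hkj⟩
  by_cases hbc_ij : i = b ∧ j = c
  · obtain ⟨rfl, rfl⟩ := hbc_ij
    refine h312 ⟨i, j, k, hij, hjk, ?_, ?_⟩ <;>
      simpa [swap_apply_of_ne_of_ne (hij.trans hjk).ne' hjk.ne']
  by_cases hbc_jk : j = b ∧ k = c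
  · obtain ⟨rfl, rfl⟩ := hbc_jk
    exact hkj.asymm hasc
  exact h132 ⟨_, _, _, swap_lt_swap_of_covBy hbc hij hbc_ij,
    swap_lt_swap_of_covBy hbc hjk hbc_jk, by simpa using hik, by simpa using hkj⟩

end Patterns

namespace IsReducedWord

variable {n : ℕ} {σ : Perm (Fin n)} {w : List ℕ}

theorem exists_ascent_step (hw : IsReducedWord n σ w) {k : ℕ} (hk : k < w.length) :
    ∃ b c : Fin n, b ⋖ c ∧
      permOfWord n (w.take (k + 1)) = permOfWord n (w.take k) * swap b c ∧
      permOfWord n (w.take k) b < permOfWord n (w.take k) c := by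
  obtain ⟨b, c, hbc, hadj⟩ := exists_adjT_eq_swap (hw.1 _ (List.getElem_mem hk))
  have hstep := permOfWord_take_succ n w hk
  rw [hadj] at hstep
  refine ⟨b, c, hbc, hstep, ?_⟩
  by_contra! hle
  have hdesc := invNum_mul_swap_of_gt hbc
    (hle.lt_of_ne ((permOfWord n (w.take k)).injective.ne hbc.ne'))
  have hprefix := invNum_permOfWord_take_le (n := n) w (Nat.zero_le k)
  have hsuffix := invNum_permOfWord_take_le (n := n) w hk
  rw [List.take_zero, permOfWord_nil, invNum_one] at hprefix
  rw [List.take_length, hw.2.1, ← hw.2.2, hstep] at hsuffix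
  omega

theorem avoiding312_of_avoiding132 (hw : IsReducedWord n σ w) (h : Avoiding132 n w) :
    Avoiding312 n w := by
  intro k hk
  induction k with
  | zero => simpa [permOfWord_nil] using avoids312_one
  | succ k ih =>
    obtain ⟨b, c, hbc, hstep, hasc⟩ := hw.exists_ascent_step hk
    rw [hstep]
    exact avoids312_mul_swap hbc hasc (h k (by omega)) (ih (by omega))

theorem avoiding132_of_avoiding312 (hw : IsReducedWord n σ w) (hσ : Avoids132 σ)
    (h : Avoiding312 n w) : Avoiding132 n w := by
  intro k hk
  induction hk using Nat.decreasingInduction with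
  | self => rwa [List.take_length, hw.2.1]
  | of_succ k hk ih =>
    obtain ⟨b, c, hbc, hstep, hasc⟩ := hw.exists_ascent_step hk
    have h312 := h (k + 1) hk
    rw [hstep] at ih h312
    exact avoids132_of_mul_swap hbc hasc ih h312

end IsReducedWord

/-- a sorting network is 132-avoiding iff it is 312-avoiding. -/
theorem sn_avoiding132_iff_avoiding312 (n : ℕ) (w : List ℕ) (hw : IsSortingNetwork n w) :
    Avoiding132 n w ↔ Avoiding312 n w :=
  ⟨IsReducedWord.avoiding312_of_avoiding132 hw,
    IsReducedWord.avoiding132_of_avoiding312 hw avoids132_revPerm⟩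
end

section
/- A sorting network w of the reverse permutation in S_n is 132-avoiding if and only if w is a lattice word of type sc_n = (n-1, n-2, ..., 1). -/
/-- A lattice word of type `sc_n = (n-1, n-2, …, 1)`: every prefix has at least as many
`i`'s as `(i+1)`'s, and the letter `i` occurs exactly `n - i` times for `1 ≤ i ≤ n-1`
(and no other letters occur). -/
def LatticeWordSC (n : ℕ) (w : List ℕ) : Prop :=
  (∀ k i : ℕ, 1 ≤ i → (w.take k).count (i + 1) ≤ (w.take k).count i) ∧
  ∀ i : ℕ, w.count i = if 1 ≤ i ∧ i < n then n - i else 0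

/-!
Record by `c i` the number of letters `i` in a prefix of the word. Along a 132-avoiding sorting
network, and along a lattice word of type `sc_n`, the intermediate permutation is determined by
`c`: value `y` precedes value `x < y` iff `x ≤ c (y - x)` (`Encodes`). The next letter `a` of a
reduced word swaps an ascent `u < t` at positions `a - 1, a`, while raising `c a` by one moves
the value `c a + 1` one step right, the value `c a + 1 + a` one step left, and nothing else.
So the form survives the step iff `u = c a + 1` and `t - u = a`, which amounts to
`c (a + 1) = c a` (automatic at an ascent) and `c a < c d` for all `d < a`, the lattice
condition for the longer prefix. When the latter fails, the value `u - 1` lies left of `u`, and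
after the swap it starts a 132 with `t, u`. Finally a permutation of this form avoids 132, and
for the reverse permutation `c i = n - i`.
-/

namespace SortingNetwork132

variable {n : ℕ}

lemma adjT_eq_swap {a : ℕ} (ha : 1 ≤ a) (han : a < n) :
    adjT n a = Equiv.swap ⟨a - 1, by omega⟩ ⟨a, han⟩ :=
  dif_pos ⟨ha, han⟩

lemma val_adjT_apply {a : ℕ} (ha : 1 ≤ a) (han : a < n) (z : Fin n) :
    (adjT n a z : ℕ) = if (z : ℕ) = a - 1 then a else if (z : ℕ) = a then a - 1 else z := by
  rw [adjT_eq_swap ha han]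
  rcases eq_or_ne z ⟨a - 1, by omega⟩ with rfl | h1
  · simp
  rcases eq_or_ne z ⟨a, han⟩ with rfl | h2
  · simp; omega
  rw [Equiv.swap_apply_of_ne_of_ne h1 h2, if_neg (fun h => h1 (Fin.ext h)),
    if_neg (fun h => h2 (Fin.ext h))]

lemma adjT_lt_adjT {a : ℕ} (ha : 1 ≤ a) (han : a < n) {i j : Fin n}
    (hij : i < j) (hne : ¬ ((i : ℕ) = a - 1 ∧ (j : ℕ) = a)) : adjT n a i < adjT n a j := by
  rw [Fin.lt_def] at hij ⊢
  rw [val_adjT_apply ha han, val_adjT_apply ha han]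
  split_ifs <;> omega

def IsAscent (σ : Equiv.Perm (Fin n)) (a : ℕ) : Prop :=
  ∃ (ha : 1 ≤ a) (han : a < n), σ ⟨a - 1, by omega⟩ < σ ⟨a, han⟩

lemma not_avoids132_mul_adjT {σ : Equiv.Perm (Fin n)} {a : ℕ} (ha : 1 ≤ a) (han : a < n)
    (hasc : σ ⟨a - 1, by omega⟩ < σ ⟨a, han⟩) {q : Fin n} (hq : (q : ℕ) < a - 1)
    (hlt : σ q < σ ⟨a - 1, by omega⟩) :
    ¬ Avoids132 (σ * adjT n a) := by
  have hfix : adjT n a q = q := by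
    rw [Fin.ext_iff, val_adjT_apply ha han, if_neg (by omega), if_neg (by omega)]
  refine fun hav => hav ⟨q, ⟨a - 1, by omega⟩, ⟨a, han⟩, Fin.lt_def.mpr hq,
    Fin.lt_def.mpr (by simp only; omega), ?_⟩
  simp only [Equiv.Perm.mul_apply, hfix]
  rw [adjT_eq_swap ha han, Equiv.swap_apply_left, Equiv.swap_apply_right]
  exact ⟨hlt, hasc⟩

lemma invNum_one : invNum (1 : Equiv.Perm (Fin n)) = 0 := by
  rw [invNum, Set.ncard_eq_zero]
  ext p
  simpa [invSet] using le_of_lt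

lemma invSet_mul_adjT {σ : Equiv.Perm (Fin n)} {a : ℕ} (ha : 1 ≤ a) (han : a < n)
    (hasc : σ ⟨a - 1, by omega⟩ < σ ⟨a, han⟩) :
    invSet (σ * adjT n a) =
      insert (⟨a - 1, by omega⟩, ⟨a, han⟩) (Prod.map (adjT n a) (adjT n a) '' invSet σ) := by
  have hinvol : ∀ z, adjT n a (adjT n a z) = z := by
    simp [adjT_eq_swap ha han]
  ext ⟨i, j⟩
  simp only [invSet, Set.mem_ofPred_eq, Set.mem_insert_iff, Set.mem_image, Prod.exists,
    Prod.map_apply, Prod.mk.injEq, Equiv.Perm.mul_apply]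
  constructor
  · rintro ⟨hij, hinv⟩
    by_cases hp : (i : ℕ) = a - 1 ∧ (j : ℕ) = a
    · exact Or.inl ⟨Fin.ext hp.1, Fin.ext hp.2⟩
    · exact Or.inr ⟨adjT n a i, adjT n a j, ⟨adjT_lt_adjT ha han hij hp, hinv⟩,
        hinvol i, hinvol j⟩
  · rintro (⟨rfl, rfl⟩ | ⟨p, q, ⟨hpq, hinv⟩, rfl, rfl⟩)
    · refine ⟨Fin.lt_def.mpr (by simp only; omega), ?_⟩
      simpa [adjT_eq_swap ha han] using hasc
    · have hp : ¬ ((p : ℕ) = a - 1 ∧ (q : ℕ) = a) := by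
        rintro ⟨hp, hq⟩
        rw [show p = ⟨a - 1, by omega⟩ from Fin.ext hp, show q = ⟨a, han⟩ from Fin.ext hq] at hinv
        exact lt_asymm hasc hinv
      exact ⟨adjT_lt_adjT ha han hpq hp, by simpa only [hinvol] using hinv⟩

lemma invNum_mul_adjT_of_isAscent {σ : Equiv.Perm (Fin n)} {a : ℕ} (h : IsAscent σ a) :
    invNum (σ * adjT n a) = invNum σ + 1 := by
  obtain ⟨ha, han, hasc⟩ := h
  have hinj : Function.Injective (Prod.map (adjT n a) (adjT n a)) :=
    (adjT n a).injective.prodMap (adjT n a).injective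
  have hnot : ((⟨a - 1, by omega⟩ : Fin n), (⟨a, han⟩ : Fin n)) ∉
      Prod.map (adjT n a) (adjT n a) '' invSet σ := by
    rintro ⟨⟨p, q⟩, ⟨hpq, -⟩, hpq'⟩
    simp only [Prod.map_apply, Prod.mk.injEq, Fin.ext_iff, val_adjT_apply ha han] at hpq'
    simp only [Fin.lt_def] at hpq
    split_ifs at hpq' <;> omega
  rw [invNum, invSet_mul_adjT ha han hasc, Set.ncard_insert_of_notMem hnot (Set.toFinite _),
    Set.ncard_image_of_injective _ hinj, invNum]

lemma invNum_mul_adjT_of_not_isAscent {σ : Equiv.Perm (Fin n)} {a : ℕ} (ha : 1 ≤ a)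
    (han : a < n) (h : ¬ IsAscent σ a) : invNum (σ * adjT n a) + 1 = invNum σ := by
  have hne : σ ⟨a - 1, by omega⟩ ≠ σ ⟨a, han⟩ := σ.injective.ne (by simp [Fin.ext_iff]; omega)
  have hgt : σ ⟨a, han⟩ < σ ⟨a - 1, by omega⟩ :=
    lt_of_le_of_ne (not_lt.mp fun hlt => h ⟨ha, han, hlt⟩) hne.symm
  have hsq : adjT n a * adjT n a = 1 := by
    rw [adjT_eq_swap ha han, Equiv.swap_mul_self]
  have h := invNum_mul_adjT_of_isAscent (σ := σ * adjT n a) ⟨ha, han, by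
    simpa [adjT_eq_swap ha han] using hgt⟩
  rwa [mul_assoc, hsq, mul_one, eq_comm] at h

lemma invNum_mul_adjT_le (σ : Equiv.Perm (Fin n)) (a : ℕ) :
    invNum (σ * adjT n a) ≤ invNum σ + 1 := by
  by_cases hr : 1 ≤ a ∧ a < n
  · by_cases h : IsAscent σ a
    · exact (invNum_mul_adjT_of_isAscent h).le
    · have := invNum_mul_adjT_of_not_isAscent hr.1 hr.2 h
      omega
  · simp [adjT, dif_neg hr]

lemma permOfWord_take_zero (w : List ℕ) : permOfWord n (w.take 0) = 1 := by
  simp [permOfWord]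

lemma permOfWord_take_succ (w : List ℕ) {k : ℕ} (hk : k < w.length) :
    permOfWord n (w.take (k + 1)) = permOfWord n (w.take k) * adjT n w[k] := by
  rw [permOfWord, permOfWord, List.take_add_one, List.getElem?_eq_getElem hk, Option.toList_some,
    List.map_append, List.prod_append, List.map_singleton, List.prod_singleton]

lemma eq_self_of_increments_le_one {f : ℕ → ℕ} {L : ℕ} (h0 : f 0 = 0) (hL : f L = L)
    (hstep : ∀ k < L, f (k + 1) ≤ f k + 1) {k : ℕ} (hk : k ≤ L) : f k = k := by
  have hup : ∀ k ≤ L, f k ≤ k := by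
    intro k hk
    induction k with
    | zero => omega
    | succ k ih =>
      have := hstep k (by omega)
      have := ih (by omega)
      omega
  have hdown : ∀ j ≤ L, L ≤ f (L - j) + j := by
    intro j hj
    induction j with
    | zero => simp [hL]
    | succ j ih =>
      have := hstep (L - (j + 1)) (by omega)
      rw [show L - (j + 1) + 1 = L - j by omega] at this
      have := ih (by omega)
      omega
  have := hup k hk
  have := hdown (L - k) (by omega)
  rw [Nat.sub_sub_self hk] at this
  omega

lemma IsReducedWord.invNum_take {σ : Equiv.Perm (Fin n)} {w : List ℕ}
    (hw : IsReducedWord n σ w) {k : ℕ} (hk : k ≤ w.length) :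
    invNum (permOfWord n (w.take k)) = k :=
  eq_self_of_increments_le_one (f := fun k => invNum (permOfWord n (w.take k)))
    (by simp only [permOfWord_take_zero, invNum_one])
    (by simp only [List.take_length, hw.2.1, hw.2.2.symm])
    (fun k hk => by
      simp only [permOfWord_take_succ w hk]
      exact invNum_mul_adjT_le _ _) hk

lemma IsReducedWord.isAscent {σ : Equiv.Perm (Fin n)} {w : List ℕ}
    (hw : IsReducedWord n σ w) {k : ℕ} (hk : k < w.length) :
    IsAscent (permOfWord n (w.take k)) w[k] := by
  by_contra h
  obtain ⟨ha, han⟩ := hw.1 _ (List.getElem_mem hk)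
  have := invNum_mul_adjT_of_not_isAscent ha han h
  rw [← permOfWord_take_succ w hk, IsReducedWord.invNum_take hw hk,
    IsReducedWord.invNum_take hw hk.le] at this
  omega

section Profile

def IsProfile (n : ℕ) (c : ℕ → ℕ) : Prop :=
  (∀ a, 1 ≤ a → c (a + 1) ≤ c a ∧ c a ≤ c (a + 1) + 1) ∧ ∀ a, 1 ≤ a → c a ≤ n - a

/-- The 0-indexed position of the 1-indexed value `v` in the permutation encoded by `c`:
`v` is preceded by the smaller values `v - d` with `c d < v - d` and by the larger values
`v + d` with `v ≤ c d`. -/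
def profilePos (n : ℕ) (c : ℕ → ℕ) (v : ℕ) : ℕ :=
  ((Finset.Icc 1 (n - 1)).filter (fun d => c d + d < v)).card +
    ((Finset.Icc 1 (n - 1)).filter (fun d => v ≤ c d)).card

variable {c : ℕ → ℕ}

lemma IsProfile.antitone (hc : IsProfile n c) {d e : ℕ} (hd : 1 ≤ d) (hde : d ≤ e) :
    c e ≤ c d := by
  obtain ⟨k, rfl⟩ := Nat.exists_eq_add_of_le hde
  induction k with
  | zero => rfl
  | succ k ih => exact ((hc.1 (d + k) (by omega)).1).trans (ih (by omega))

lemma IsProfile.le_add_sub (hc : IsProfile n c) {d e : ℕ} (hd : 1 ≤ d) (hde : d ≤ e) :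
    c d ≤ c e + (e - d) := by
  obtain ⟨k, rfl⟩ := Nat.exists_eq_add_of_le hde
  induction k with
  | zero => simp
  | succ k ih =>
    have := (hc.1 (d + k) (by omega)).2
    have := ih (by omega)
    rw [← add_assoc]
    omega

lemma isProfile_zero : IsProfile n 0 :=
  ⟨fun _ _ => by simp, fun _ _ => Nat.zero_le _⟩

lemma IsProfile.update (hc : IsProfile n c) {a : ℕ} (ha : 1 ≤ a) (han : a < n)
    (heq : c (a + 1) = c a) (hmin : ∀ d, 1 ≤ d → d < a → c a < c d) :
    IsProfile n (Function.update c a (c a + 1)) := by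
  constructor
  · intro d hd
    rcases eq_or_ne d a with rfl | hda
    · rw [Function.update_self, Function.update_of_ne (by omega)]
      omega
    rw [Function.update_of_ne hda]
    rcases eq_or_ne (d + 1) a with hda' | hda'
    · rw [hda', Function.update_self]
      have := hmin d hd (by omega)
      have := hc.le_add_sub hd (by omega : d ≤ a)
      omega
    · rw [Function.update_of_ne hda']
      exact hc.1 d hd
  · intro d hd
    rcases eq_or_ne d a with rfl | hda
    · rw [Function.update_self]
      have := hc.2 (d + 1) (by omega)
      omega
    · rw [Function.update_of_ne hda]
      exact hc.2 d hd

lemma card_filter_Icc_eq {p : ℕ → Prop} [DecidablePred p] {m : ℕ} (hm : m ≤ n - 1)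
    (hlow : ∀ d, 1 ≤ d → d ≤ m → p d) (hhigh : ∀ d, m < d → d ≤ n - 1 → ¬ p d) :
    ((Finset.Icc 1 (n - 1)).filter p).card = m := by
  have : (Finset.Icc 1 (n - 1)).filter p = Finset.Icc 1 m := by
    ext d
    simp only [Finset.mem_filter, Finset.mem_Icc]
    constructor
    · rintro ⟨⟨hd1, hd2⟩, hp⟩
      exact ⟨hd1, not_lt.mp fun h => hhigh d h hd2 hp⟩
    · rintro ⟨hd1, hd2⟩
      exact ⟨⟨hd1, by omega⟩, hlow d hd1 hd2⟩
  rw [this, Nat.card_Icc, Nat.add_sub_cancel]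

lemma profilePos_zero {v : ℕ} (hv : 1 ≤ v) (hvn : v ≤ n) : profilePos n 0 v = v - 1 := by
  rw [profilePos, card_filter_Icc_eq (m := v - 1) (by omega)
      (fun d _ _ => by simp only [Pi.zero_apply]; omega)
      (fun d _ _ => by simp only [Pi.zero_apply]; omega),
    card_filter_Icc_eq (m := 0) (by omega) (fun d _ _ => by omega)
      (fun d _ _ => by simp only [Pi.zero_apply]; omega), add_zero]

lemma profilePos_add_one_of_lt (hc : IsProfile n c) {b : ℕ} (hb : 1 ≤ b) (hbn : b < n)
    (hlow : ∀ d, 1 ≤ d → d < b → c b < c d) :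
    profilePos n c (c b + 1) = b - 1 := by
  have hsmall : ((Finset.Icc 1 (n - 1)).filter (fun d => c d + d < c b + 1)).card = 0 := by
    refine card_filter_Icc_eq (Nat.zero_le _) (by omega) fun d hd _ hlt => ?_
    rcases le_or_gt d b with h | h
    · have := hc.antitone (by omega) h; omega
    · have := hc.le_add_sub hb h.le; omega
  have hlarge : ((Finset.Icc 1 (n - 1)).filter (fun d => c b + 1 ≤ c d)).card = b - 1 := by
    refine card_filter_Icc_eq (by omega) (fun d hd1 hd2 => hlow d hd1 (by omega)) ?_
    intro d hd _ hle
    have := hc.antitone hb (by omega : b ≤ d); omega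
  rw [profilePos, hsmall, hlarge, zero_add]

lemma profilePos_add_one_add_of_eq (hc : IsProfile n c) {b : ℕ} (hb : 1 ≤ b) (hbn : b < n)
    (heq : c (b + 1) = c b) :
    profilePos n c (c b + 1 + b) = b := by
  have hsmall : ((Finset.Icc 1 (n - 1)).filter (fun d => c d + d < c b + 1 + b)).card = b := by
    refine card_filter_Icc_eq (by omega) (fun d hd1 hd2 => ?_) (fun d hd _ hlt => ?_)
    · have := hc.le_add_sub hd1 hd2; omega
    · have := hc.le_add_sub (by omega : 1 ≤ b + 1) (by omega : b + 1 ≤ d); omega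
  have hlarge : ((Finset.Icc 1 (n - 1)).filter (fun d => c b + 1 + b ≤ c d)).card = 0 := by
    refine card_filter_Icc_eq (Nat.zero_le _) (by omega) fun d hd _ hle => ?_
    have := hc.le_add_sub le_rfl hb
    have := hc.antitone le_rfl hd
    omega
  rw [profilePos, hsmall, hlarge, add_zero]

lemma profilePos_of_eq_add_one (hc : IsProfile n c) {a : ℕ} (ha : 1 ≤ a) (han : a < n)
    (hstep : c a = c (a + 1) + 1) :
    profilePos n c (c a) = a := by
  have hsmall : ((Finset.Icc 1 (n - 1)).filter (fun d => c d + d < c a)).card = 0 := by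
    refine card_filter_Icc_eq (Nat.zero_le _) (by omega) fun d hd _ hlt => ?_
    rcases le_or_gt d a with h | h
    · have := hc.antitone hd h; omega
    · have := hc.le_add_sub (by omega : 1 ≤ a + 1) (by omega : a + 1 ≤ d); omega
  have hlarge : ((Finset.Icc 1 (n - 1)).filter (fun d => c a ≤ c d)).card = a := by
    refine card_filter_Icc_eq (by omega) (fun d hd1 hd2 => hc.antitone hd1 hd2) ?_
    intro d hd _ hle
    have := hc.antitone (by omega : 1 ≤ a + 1) hd; omega
  rw [profilePos, hsmall, hlarge, zero_add]

lemma lt_profilePos_of_lt (hc : IsProfile n c) {a v : ℕ} (han : a + 1 ≤ n - 1)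
    (hstep : c a = c (a + 1) + 1) (hv : v < c a) :
    a < profilePos n c v := by
  have hsub : Finset.Icc 1 (a + 1) ⊆ (Finset.Icc 1 (n - 1)).filter (fun d => v ≤ c d) := by
    intro d hd
    rw [Finset.mem_Icc] at hd
    rw [Finset.mem_filter, Finset.mem_Icc]
    have := hc.antitone hd.1 hd.2
    exact ⟨⟨hd.1, by omega⟩, by omega⟩
  have := Finset.card_le_card hsub
  rw [Nat.card_Icc, Nat.add_sub_cancel] at this
  unfold profilePos
  omega

lemma card_filter_add_ite_eq {s : Finset ℕ} {a : ℕ} (ha : a ∈ s) (p q : ℕ → Prop)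
    [DecidablePred p] [DecidablePred q] (h : ∀ d ∈ s, d ≠ a → (p d ↔ q d)) :
    (s.filter p).card + (if q a then 1 else 0) = (s.filter q).card + (if p a then 1 else 0) := by
  rw [Finset.card_filter, Finset.card_filter, ← Finset.add_sum_erase _ _ ha,
    ← Finset.add_sum_erase _ _ ha, Finset.sum_congr rfl fun d hd =>
      if_congr (h d (Finset.mem_of_mem_erase hd) (Finset.ne_of_mem_erase hd)) rfl rfl]
  omega

lemma profilePos_update_add_ite {a : ℕ} (ha : 1 ≤ a) (han : a ≤ n - 1) (v : ℕ) :
    profilePos n (Function.update c a (c a + 1)) v + (if v = c a + 1 + a then 1 else 0) =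
      profilePos n c v + (if v = c a + 1 then 1 else 0) := by
  have hmem : a ∈ Finset.Icc 1 (n - 1) := Finset.mem_Icc.mpr ⟨ha, han⟩
  have hother : ∀ d ∈ Finset.Icc 1 (n - 1), d ≠ a →
      Function.update c a (c a + 1) d = c d := fun d _ hd => Function.update_of_ne hd _ c
  have hsmall := card_filter_add_ite_eq hmem (fun d => Function.update c a (c a + 1) d + d < v)
    (fun d => c d + d < v) fun d hd hda => by simp only [hother d hd hda]
  have hlarge := card_filter_add_ite_eq hmem (fun d => v ≤ Function.update c a (c a + 1) d)
    (fun d => v ≤ c d) fun d hd hda => by simp only [hother d hd hda]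
  simp only [Function.update_self] at hsmall hlarge
  unfold profilePos
  split_ifs at hsmall hlarge ⊢ <;> omega

end Profile

structure Encodes (n : ℕ) (σ : Equiv.Perm (Fin n)) (c : ℕ → ℕ) : Prop where
  isProfile : IsProfile n c
  symm_apply : ∀ v : Fin n, (σ.symm v : ℕ) = profilePos n c (v + 1)
  profilePos_lt_iff : ∀ x y, 1 ≤ x → x < y → y ≤ n →
    (profilePos n c y < profilePos n c x ↔ x ≤ c (y - x))

lemma encodes_one : Encodes n 1 0 where
  isProfile := isProfile_zero
  symm_apply v := by
    rw [profilePos_zero (by omega) (by omega)]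
    rfl
  profilePos_lt_iff x y hx hxy hyn := by
    rw [profilePos_zero hx (by omega), profilePos_zero (by omega) hyn, Pi.zero_apply]
    omega

namespace Encodes

variable {σ : Equiv.Perm (Fin n)} {c : ℕ → ℕ}

lemma profilePos_apply (h : Encodes n σ c) (i : Fin n) : profilePos n c (σ i + 1) = i := by
  rw [← h.symm_apply, Equiv.symm_apply_apply]

lemma symm_apply_sub_one (h : Encodes n σ c) {x : ℕ} (hx : 1 ≤ x) (hxn : x ≤ n) :
    (σ.symm ⟨x - 1, by omega⟩ : ℕ) = profilePos n c x := by
  rw [h.symm_apply, Nat.sub_add_cancel hx]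

lemma profilePos_lt (h : Encodes n σ c) {x : ℕ} (hx : 1 ≤ x) (hxn : x ≤ n) :
    profilePos n c x < n :=
  h.symm_apply_sub_one hx hxn ▸ (σ.symm _).isLt

lemma profilePos_inj (h : Encodes n σ c) {x y : ℕ} (hx : 1 ≤ x) (hxn : x ≤ n) (hy : 1 ≤ y)
    (hyn : y ≤ n) : profilePos n c x = profilePos n c y ↔ x = y := by
  refine ⟨fun hxy => ?_, fun hxy => hxy ▸ rfl⟩
  rw [← h.symm_apply_sub_one hx hxn, ← h.symm_apply_sub_one hy hyn, ← Fin.ext_iff,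
    σ.symm.injective.eq_iff, Fin.mk.injEq] at hxy
  omega

lemma apply_eq (h : Encodes n σ c) {x p : ℕ} (hx : 1 ≤ x) (hxn : x ≤ n) (hp : p < n)
    (hpos : profilePos n c x = p) : (σ ⟨p, hp⟩ : ℕ) = x - 1 := by
  have : σ.symm ⟨x - 1, by omega⟩ = ⟨p, hp⟩ := Fin.ext (by rw [h.symm_apply_sub_one hx hxn, hpos])
  rw [← this, Equiv.apply_symm_apply]

lemma avoids132 (h : Encodes n σ c) : Avoids132 σ := by
  rintro ⟨i₁, i₂, i₃, h₁₂, h₂₃, h₁₃, h₃₂⟩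
  -- with values `x < y < z` placed as `x z y`: `z` precedes `y`, so `y ≤ c (z - y)`, whence
  -- `x ≤ c (z - x)` and `z` would precede `x` as well
  simp only [Fin.lt_def] at h₁₂ h₂₃ h₁₃ h₃₂
  have hz := (σ i₂).isLt
  have hyz := (h.profilePos_lt_iff (σ i₃ + 1) (σ i₂ + 1) (by omega) (by omega) (by omega)).mp
  have hxz := (h.profilePos_lt_iff (σ i₁ + 1) (σ i₂ + 1) (by omega) (by omega) (by omega)).mpr
  rw [h.profilePos_apply, h.profilePos_apply, Nat.add_sub_add_right] at hyz hxz
  have := h.isProfile.le_add_sub (d := σ i₂ - σ i₃) (e := σ i₂ - σ i₁) (by omega) (by omega)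
  have := hyz (by omega)
  have := hxz (by omega)
  omega

lemma eq_sub_of_revPerm (h : Encodes n Fin.revPerm c) {i : ℕ} (hi : 1 ≤ i)
    (hin : i < n) : c i = n - i := by
  have hpos : ∀ v, 1 ≤ v → v ≤ n → profilePos n c v = n - v := by
    intro v hv hvn
    rw [← h.symm_apply_sub_one hv hvn, Fin.revPerm_symm, Fin.revPerm_apply, Fin.val_rev,
      Fin.val_mk]
    omega
  have := (h.profilePos_lt_iff (n - i) n (by omega) (by omega) le_rfl).mp
    (by rw [hpos n (by omega) le_rfl, hpos (n - i) (by omega) (by omega)]; omega)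
  rw [Nat.sub_sub_self hin.le] at this
  have := h.isProfile.2 i hi
  omega

lemma eq_of_isAscent (h : Encodes n σ c) {a : ℕ} (hasc : IsAscent σ a) : c (a + 1) = c a := by
  obtain ⟨ha, han, hlt⟩ := hasc
  rw [Fin.lt_def] at hlt
  have hc := h.isProfile
  by_contra hne
  have hstep : c a = c (a + 1) + 1 := by have := hc.1 a ha; omega
  have hcan := hc.2 a ha
  have hσa : (σ ⟨a, han⟩ : ℕ) = c a - 1 :=
    h.apply_eq (by omega) (by omega) han (profilePos_of_eq_add_one hc ha han hstep)
  have hpos := h.profilePos_apply ⟨a - 1, by omega⟩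
  rcases le_or_gt (a + 1) (n - 1) with hroom | hlast
  · have := lt_profilePos_of_lt hc hroom hstep (v := σ ⟨a - 1, by omega⟩ + 1) (by omega)
    simp only at hpos
    omega
  · omega

section Step

variable {a : ℕ}

lemma profilePos_eq_iff (h : Encodes n σ c) (ha : 1 ≤ a) (han : a < n) (heq : c (a + 1) = c a)
    (hmin : ∀ d, 1 ≤ d → d < a → c a < c d) {x : ℕ} (hx : 1 ≤ x) (hxn : x ≤ n) :
    (profilePos n c x = a - 1 ↔ x = c a + 1) ∧ (profilePos n c x = a ↔ x = c a + 1 + a) := by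
  have hroom : c a + 1 + a ≤ n := by have := h.isProfile.2 (a + 1) (by omega); omega
  rw [← h.profilePos_inj hx hxn (by omega) (by omega), ← h.profilePos_inj hx hxn (by omega) hroom,
    profilePos_add_one_of_lt h.isProfile ha han hmin,
    profilePos_add_one_add_of_eq h.isProfile ha han heq]
  exact ⟨Iff.rfl, Iff.rfl⟩

lemma mul_adjT_symm_apply (h : Encodes n σ c) (ha : 1 ≤ a) (han : a < n)
    (heq : c (a + 1) = c a) (hmin : ∀ d, 1 ≤ d → d < a → c a < c d) (v : Fin n) :
    ((σ * adjT n a).symm v : ℕ) = profilePos n (Function.update c a (c a + 1)) (v + 1) := by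
  have hupd := profilePos_update_add_ite (n := n) (c := c) (a := a) ha (by omega) (v + 1)
  obtain ⟨hu, ht⟩ := h.profilePos_eq_iff ha han heq hmin (x := v + 1) (by omega) v.isLt
  have hsymm : (σ * adjT n a).symm v = adjT n a (σ.symm v) := by
    rw [adjT_eq_swap ha han]
    rfl
  rw [hsymm, val_adjT_apply ha han, h.symm_apply]
  split_ifs at hupd ⊢ <;> omega

lemma update_profilePos_lt_iff (h : Encodes n σ c) (ha : 1 ≤ a) (han : a < n)
    (heq : c (a + 1) = c a) (hmin : ∀ d, 1 ≤ d → d < a → c a < c d) {x y : ℕ} (hx : 1 ≤ x)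
    (hxy : x < y) (hyn : y ≤ n) :
    profilePos n (Function.update c a (c a + 1)) y <
        profilePos n (Function.update c a (c a + 1)) x ↔
      x ≤ Function.update c a (c a + 1) (y - x) := by
  have hold := h.profilePos_lt_iff x y hx hxy hyn
  have hux := profilePos_update_add_ite (n := n) (c := c) (a := a) ha (by omega) x
  have huy := profilePos_update_add_ite (n := n) (c := c) (a := a) ha (by omega) y
  obtain ⟨hxu, hxt⟩ := h.profilePos_eq_iff ha han heq hmin hx (by omega)
  obtain ⟨hyu, hyt⟩ := h.profilePos_eq_iff ha han heq hmin (by omega) hyn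
  rcases eq_or_ne (y - x) a with hd | hd
  · rw [hd, Function.update_self]
    rw [hd] at hold
    split_ifs at hux huy <;> omega
  · rw [Function.update_of_ne hd]
    split_ifs at hux huy <;> omega

lemma mul_adjT (h : Encodes n σ c) (ha : 1 ≤ a) (han : a < n) (heq : c (a + 1) = c a)
    (hmin : ∀ d, 1 ≤ d → d < a → c a < c d) :
    Encodes n (σ * adjT n a) (Function.update c a (c a + 1)) where
  isProfile := h.isProfile.update ha han heq hmin
  symm_apply := h.mul_adjT_symm_apply ha han heq hmin
  profilePos_lt_iff _ _ hx hxy hyn := h.update_profilePos_lt_iff ha han heq hmin hx hxy hyn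

lemma lt_of_profilePos_eq (h : Encodes n σ c) {u t : ℕ} (ha : 1 ≤ a) (hut : u < t)
    (htn : t ≤ n) (hu : profilePos n c u = a - 1) (ht : profilePos n c t = a)
    (hcu : u = c (t - u) + 1) :
    ∀ d, 1 ≤ d → d < t - u → c (t - u) < c d := by
  have hc := h.isProfile
  suffices hprev : 2 ≤ t - u → c (t - u) < c (t - u - 1) by
    intro d hd hdb
    have := hc.antitone hd (by omega : d ≤ t - u - 1)
    have := hprev (by omega)
    omega
  intro hb
  by_contra hge
  have := hc.antitone (by omega : 1 ≤ t - u - 1) (by omega : t - u - 1 ≤ t - u)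
  -- then `t - 1` lies right of `t`, which forces `t - 1 ≤ c 1 ≤ c (t - u) + (t - u - 1) = t - 2`
  have hright := h.profilePos_lt_iff u (t - 1) (by omega) (by omega) (by omega)
  rw [show t - 1 - u = t - u - 1 by omega] at hright
  have hneu := (h.profilePos_inj (x := t - 1) (y := u) (by omega) (by omega) (by omega)
    (by omega)).not.mpr (by omega)
  have hnet := (h.profilePos_inj (x := t - 1) (y := t) (by omega) (by omega) (by omega)
    htn).not.mpr (by omega)
  have hlast := h.profilePos_lt_iff (t - 1) t (by omega) (by omega) htn
  rw [show t - (t - 1) = 1 by omega] at hlast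
  have := hc.le_add_sub le_rfl (by omega : 1 ≤ t - u)
  omega

lemma lt_of_avoids132 (h : Encodes n σ c) (hasc : IsAscent σ a)
    (hav : Avoids132 (σ * adjT n a)) :
    ∀ d, 1 ≤ d → d < a → c a < c d := by
  obtain ⟨ha, han, hlt⟩ := hasc
  have hc := h.isProfile
  have hu : profilePos n c (σ ⟨a - 1, by omega⟩ + 1) = a - 1 := h.profilePos_apply _
  have ht : profilePos n c (σ ⟨a, han⟩ + 1) = a := h.profilePos_apply _
  have htn := (σ ⟨a, han⟩).isLt
  rw [Fin.lt_def] at hlt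
  set u := (σ ⟨a - 1, by omega⟩ : ℕ) + 1
  set t := (σ ⟨a, han⟩ : ℕ) + 1
  have hcb : c (t - u) < u := by
    have := h.profilePos_lt_iff u t (by omega) (by omega) htn
    omega
  have hcu : u = c (t - u) + 1 := by
    suffices u - 1 ≤ c (t - u + 1) by
      have := (hc.1 (t - u) (by omega)).1
      omega
    by_contra hlow
    -- otherwise the value `u - 1` lies left of `u` and forms a 132 with `t, u` after `s_a`
    have hprec := h.profilePos_lt_iff (u - 1) t (by omega) (by omega) htn
    rw [show t - (u - 1) = t - u + 1 by omega] at hprec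
    have hneu := (h.profilePos_inj (x := u - 1) (y := u) (by omega) (by omega) (by omega)
      (by omega)).not.mpr (by omega)
    have hnet := (h.profilePos_inj (x := u - 1) (y := t) (by omega) (by omega) (by omega)
      htn).not.mpr (by omega)
    have hqn := h.profilePos_lt (x := u - 1) (by omega) (by omega)
    have hσq := h.apply_eq (x := u - 1) (by omega) (by omega) hqn rfl
    exact not_avoids132_mul_adjT ha han (Fin.lt_def.mpr hlt) (q := ⟨_, hqn⟩)
      (show profilePos n c (u - 1) < a - 1 by omega)
      (Fin.lt_def.mpr (by omega)) hav
  have hmin := h.lt_of_profilePos_eq ha (by omega) (by omega) hu ht hcu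
  have hba : t - u = a := by
    have := profilePos_add_one_of_lt hc (by omega) (by omega) hmin
    rw [← hcu, hu] at this
    omega
  exact hba ▸ hmin

end Step

end Encodes

lemma count_take_succ (w : List ℕ) {k : ℕ} (hk : k < w.length) :
    (fun i => (w.take (k + 1)).count i) =
      Function.update (fun i => (w.take k).count i) w[k] ((w.take k).count w[k] + 1) := by
  funext i
  rw [List.take_add_one, List.getElem?_eq_getElem hk, Option.toList_some, List.count_append]
  rcases eq_or_ne i w[k] with rfl | hne
  · simp
  · simp [Function.update_of_ne hne, Ne.symm hne]

lemma IsReducedWord.encodes_take {σ : Equiv.Perm (Fin n)} {w : List ℕ}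
    (hw : IsReducedWord n σ w)
    (hmin : ∀ k (hk : k < w.length),
      Encodes n (permOfWord n (w.take k)) (fun i => (w.take k).count i) →
        ∀ d, 1 ≤ d → d < w[k] → (w.take k).count w[k] < (w.take k).count d)
    {k : ℕ} (hk : k ≤ w.length) :
    Encodes n (permOfWord n (w.take k)) (fun i => (w.take k).count i) := by
  induction k with
  | zero =>
    simp only [List.take_zero, List.count_nil]
    exact encodes_one
  | succ k ih =>
    have h := ih (by omega)
    obtain ⟨ha, han⟩ := hw.1 _ (List.getElem_mem hk)
    rw [permOfWord_take_succ w hk, count_take_succ w hk]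
    exact h.mul_adjT ha han (h.eq_of_isAscent (IsReducedWord.isAscent hw hk)) (hmin k hk h)

lemma count_take_lt_of_lattice {w : List ℕ}
    (hlat : ∀ k i, 1 ≤ i → (w.take k).count (i + 1) ≤ (w.take k).count i) {k : ℕ}
    (hk : k < w.length) (hc : IsProfile n (fun i => (w.take k).count i)) :
    ∀ d, 1 ≤ d → d < w[k] → (w.take k).count w[k] < (w.take k).count d := by
  intro d hd hdk
  have hlat_succ := hlat (k + 1) (w[k] - 1) (by omega)
  rw [Nat.sub_add_cancel (by omega)] at hlat_succ
  have hself : (w.take (k + 1)).count w[k] = (w.take k).count w[k] + 1 := by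
    simpa using congrFun (count_take_succ w hk) w[k]
  have hprev : (w.take (k + 1)).count (w[k] - 1) = (w.take k).count (w[k] - 1) := by
    simpa [Function.update_of_ne (show w[k] - 1 ≠ w[k] by omega)] using
      congrFun (count_take_succ w hk) (w[k] - 1)
  have := hc.antitone hd (by omega : d ≤ w[k] - 1)
  omega

lemma latticeWordSC_of_encodes {w : List ℕ} (hw : IsSortingNetwork n w)
    (h : ∀ k ≤ w.length, Encodes n (permOfWord n (w.take k)) (fun i => (w.take k).count i)) :
    LatticeWordSC n w := by
  refine ⟨fun k i hi => ?_, fun i => ?_⟩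
  · rcases le_or_gt k w.length with hk | hk
    · exact ((h k hk).isProfile.1 i hi).1
    · rw [List.take_of_length_le hk.le]
      simpa using ((h _ le_rfl).isProfile.1 i hi).1
  · have hrev := h w.length le_rfl
    rw [List.take_length, hw.2.1] at hrev
    split_ifs with hi
    · exact hrev.eq_sub_of_revPerm hi.1 hi.2
    · exact List.count_eq_zero.mpr fun hmem => hi (hw.1 i hmem)

end SortingNetwork132

open SortingNetwork132

/-- a sorting network is 132-avoiding iff it is a lattice word of type `sc_n`. -/
theorem sn_avoiding132_iff_latticeWord (n : ℕ) (w : List ℕ) (hw : IsSortingNetwork n w) :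
    Avoiding132 n w ↔ LatticeWordSC n w := by
  constructor
  · intro hav
    refine latticeWordSC_of_encodes hw fun k hk => IsReducedWord.encodes_take hw ?_ hk
    intro k hk h
    have hav_succ := hav (k + 1) hk
    rw [permOfWord_take_succ w hk] at hav_succ
    exact h.lt_of_avoids132 (IsReducedWord.isAscent hw hk) hav_succ
  · intro hlat k hk
    exact (IsReducedWord.encodes_take hw
      (fun _ hk h => count_take_lt_of_lattice hlat.1 hk h.isProfile) hk).avoids132
end
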